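/- arXiv:2310.13067 — 6 statements merged into one kernel-verified Lean document; each statement's English description precedes it below -/
import Mathlib

section
/- For every upcycle u for A^n, the graph S(u) contains a Hamilton cycle. -/
/-- The window of length `n` of the cyclic partial word `u` starting at position `i`
covers the total word `w`. -/
def Covers (a n : ℕ) (u : ℕ → Option (Fin a)) (i : ℕ) (w : Fin n → Fin a) : Prop :=
  ∀ j : Fin n, u (i + (j : ℕ)) = none ∨ u (i + (j : ℕ)) = some (w j)

/-- `u`, viewed as a cyclic partial word of length `N`, is a universal partial cycle
for `(Fin a)^n`. -/
def IsUpcycle (a n N : ℕ) (u : ℕ → Option (Fin a)) : Prop :=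
  (∀ i, u (i + N) = u i) ∧ ∀ w : Fin n → Fin a, ∃! i : Fin N, Covers a n u (i : ℕ) w

/-- `x → y` is an edge of the De Bruijn graph `B(a, n)`. -/
def DBEdge (a n : ℕ) (x y : Fin n → Fin a) : Prop :=
  ∀ (i : ℕ) (h : i + 1 < n), y ⟨i, by omega⟩ = x ⟨i + 1, h⟩

/-- `x → y` is an edge of the spanning subgraph `S(u)` of the De Bruijn graph `B(a,n)`:
it is a De Bruijn edge and `x`, `y` are covered by consecutive windows of `u`. -/
def SEdge (a n : ℕ) (u : ℕ → Option (Fin a)) (x y : Fin n → Fin a) : Prop :=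
  DBEdge a n x y ∧ ∃ i : ℕ, Covers a n u i x ∧ Covers a n u (i + 1) y

/-!
Let `N = a ^ (n - d)` be the period of `u` and `M` the number of holes in one period. Fill the
`k`-th hole of `u` with `h k`, where `h` has period `a ^ d * M` and, within a period, its windows of
length `d` at positions in a fixed residue class mod `M` are pairwise distinct. Such an `h` is read
off an Eulerian circuit of the tensor product of the directed `M`-cycle with the De Bruijn graph on
words of length `d - 1`; this graph is balanced and strongly connected.

The windows of length `n` of the filled word form a closed walk of length `a ^ n` in `S(u)`. If two
of them agree, they lie at positions `i` and `i + q * N` by uniqueness in the upcycle; the windows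
of `h` filling their `d` holes then agree and lie at positions `q * M` apart, which forces
`a ^ d ∣ q`.
-/

open Equiv Relation
open Function (Periodic)

namespace Equiv.Perm

variable {α : Type*} [Finite α] [DecidableEq α] {σ : Perm α} {x y z : α}

theorem sameCycle_mul_swap_apply_left (hxy : ¬σ.SameCycle x y) (hz : σ.SameCycle x z) :
    (σ * swap x y).SameCycle (σ x) z := by
  have walk : ∀ n : ℕ, (σ * swap x y).SameCycle (σ x) ((σ ^ n) (σ x)) := by
    intro n
    induction n with
    | zero => rfl
    | succ n ih =>
      have hxw : σ.SameCycle x ((σ ^ n) (σ x)) :=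
        sameCycle_pow_right.2 (SameCycle.refl σ x).apply_right
      rw [pow_succ', mul_apply]
      generalize (σ ^ n) (σ x) = w at ih hxw ⊢
      by_cases hwx : w = x
      · rw [hwx]
      have hwy : w ≠ y := fun hwy => hxy (hwy ▸ hxw)
      have hτw : (σ * swap x y) w = σ w := by rw [mul_apply, swap_apply_of_ne_of_ne hwx hwy]
      exact hτw ▸ ih.trans (SameCycle.refl _ w).apply_right
  obtain ⟨n, rfl⟩ := (sameCycle_apply_left.2 hz).exists_nat_pow_eq
  exact walk n

theorem sameCycle_mul_swap (hxy : ¬σ.SameCycle x y) (hz : σ.SameCycle x z ∨ σ.SameCycle y z) :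
    (σ * swap x y).SameCycle x z := by
  have hx : (σ * swap x y).SameCycle x (σ x) :=
    (sameCycle_mul_swap_apply_left hxy (SameCycle.refl σ x)).symm
  rcases hz with hz | hz
  · exact hx.trans (sameCycle_mul_swap_apply_left hxy hz)
  · have hyx : ¬σ.SameCycle y x := fun h => hxy h.symm
    have hy : (σ * swap x y).SameCycle x (σ y) := by
      simpa [mul_apply] using (SameCycle.refl (σ * swap x y) x).apply_right
    exact hy.trans (swap_comm x y ▸ sameCycle_mul_swap_apply_left hyx hz)

end Equiv.Perm

theorem Relation.ReflTransGen.exists_rel_leaving {α : Type*} {r : α → α → Prop} {p : α → Prop}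
    {a b : α} (hab : ReflTransGen r a b) (ha : p a) (hb : ¬p b) :
    ∃ c d, r c d ∧ p c ∧ ¬p d := by
  induction hab with
  | refl => exact absurd ha hb
  | @tail b c _ hbc ih =>
    by_cases hpb : p b
    · exact ⟨b, c, hbc, hpb, hb⟩
    · exact ih hpb

open Equiv.Perm in
/-- An Eulerian circuit, encoded as a cyclic permutation of the edges sending each edge to an edge
leaving its target; a permutation `σ₀` with this property but possibly many cycles exists iff every
vertex is balanced. Among all such permutations take one with the largest cycle through a fixed
edge: an edge leaving that cycle would let a transposition merge two cycles. -/
theorem exists_perm_isCycleOn_univ_of_connected {E V : Type*} [Finite E] (s t : E → V)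
    {σ₀ : Perm E} (hσ₀ : ∀ e, s (σ₀ e) = t e)
    (hconn : ∀ e f, ReflTransGen (fun e f => t e = s f) e f) :
    ∃ σ : Perm E, (∀ e, s (σ e) = t e) ∧ σ.IsCycleOn Set.univ := by
  classical
  cases isEmpty_or_nonempty E
  · exact ⟨σ₀, hσ₀, isCycleOn_of_subsingleton _ _⟩
  have := Fintype.ofFinite E
  let e₀ := Classical.arbitrary E
  obtain ⟨σ, hσ, hmax⟩ := Finset.exists_max_image
    (Finset.univ.filter fun σ : Perm E => ∀ e, s (σ e) = t e)
    (fun σ => (Finset.univ.filter (σ.SameCycle e₀)).card) ⟨σ₀, by simpa using hσ₀⟩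
  have hσ' : ∀ e, s (σ e) = t e := (Finset.mem_filter.1 hσ).2
  suffices hall : ∀ z, σ.SameCycle e₀ z from
    ⟨σ, hσ', σ.bijective.bijOn_univ, fun x _ y _ => ((hall x).symm.trans (hall y))⟩
  by_contra! ⟨z, hz⟩
  obtain ⟨c, d, hcd, hc, hd⟩ := (hconn e₀ z).exists_rel_leaving (SameCycle.refl σ e₀) hz
  set y := σ⁻¹ d
  have hyd : σ y = d := σ.apply_symm_apply d
  have hcy : ¬σ.SameCycle c y := fun h =>
    hd (hc.trans (h.trans (hyd ▸ (SameCycle.refl σ y).apply_right)))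
  have hty : t y = t c := by rw [← hσ' y, hyd, hcd]
  have hτ : ∀ e, s ((σ * swap c y) e) = t e := by
    intro e
    rw [mul_apply, hσ']
    rcases eq_or_ne e c with rfl | hec
    · rw [swap_apply_left, hty]
    rcases eq_or_ne e y with rfl | hey
    · rw [swap_apply_right, hty]
    · rw [swap_apply_of_ne_of_ne hec hey]
  have hlt : (Finset.univ.filter (σ.SameCycle e₀)).card
      < (Finset.univ.filter ((σ * swap c y).SameCycle e₀)).card := by
    have hmerge : ∀ w, σ.SameCycle c w ∨ σ.SameCycle y w → (σ * swap c y).SameCycle e₀ w :=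
      fun w hw => (sameCycle_mul_swap hcy (Or.inl hc.symm)).symm.trans (sameCycle_mul_swap hcy hw)
    refine Finset.card_lt_card ⟨fun w hw => ?_, fun hsub => ?_⟩
    · simp only [Finset.mem_filter, Finset.mem_univ, true_and] at hw ⊢
      exact hmerge w (Or.inl (hc.symm.trans hw))
    · have := hsub (by simpa using hmerge y (Or.inr (SameCycle.refl σ y)))
      simp only [Finset.mem_filter, Finset.mem_univ, true_and] at this
      exact hcy (hc.symm.trans this)
  exact absurd (hmax _ (Finset.mem_filter.2 ⟨Finset.mem_univ _, hτ⟩)) (not_le.2 hlt)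

def window {α : Type*} (h : ℕ → α) (n i : ℕ) : Fin n → α := fun j => h (i + j)

theorem periodic_window {α : Type*} {g : ℕ → α} {c : ℕ} (hg : Periodic g c) (n : ℕ) :
    Periodic (window g n) c := fun i => funext fun j => by
  simp only [window, add_right_comm i c, hg _]

section CyclicDeBruijn

variable (α : Type*) (M d : ℕ)

/- Edges and vertices of the tensor product of the directed `M`-cycle with the De Bruijn graph on
words of length `d` over `α`: an edge is a word of length `d + 1` tagged by a residue mod `M`. -/

def cdbSource (e : ZMod M × (Fin (d + 1) → α)) : ZMod M × (Fin d → α) := (e.1, Fin.init e.2)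

def cdbTarget (e : ZMod M × (Fin (d + 1) → α)) : ZMod M × (Fin d → α) := (e.1 + 1, Fin.tail e.2)

def cdbRotate : Perm (ZMod M × (Fin (d + 1) → α)) :=
  (Equiv.addRight 1).prodCongr ((finRotate (d + 1)).symm.arrowCongr (Equiv.refl α))

variable {α M d}

theorem cdbSource_rotate (e : ZMod M × (Fin (d + 1) → α)) :
    cdbSource α M d (cdbRotate α M d e) = cdbTarget α M d e := by
  ext j <;> simp [cdbSource, cdbTarget, cdbRotate, Fin.init, Fin.tail, Fin.coeSucc_eq_succ]

theorem cdbTarget_window (c : ℕ → α) (r : ZMod M) (i : ℕ) :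
    cdbTarget α M d (r + i, window c (d + 1) i) =
      cdbSource α M d (r + (i + 1 : ℕ), window c (d + 1) (i + 1)) := by
  ext j
  · simp [cdbSource, cdbTarget, add_assoc]
  · simp only [cdbSource, cdbTarget, window, Fin.init, Fin.tail, Fin.val_succ, Fin.val_castSucc]
    ring_nf

theorem cdb_connected [NeZero M] (e f : ZMod M × (Fin (d + 1) → α)) :
    ReflTransGen (fun e f => cdbTarget α M d e = cdbSource α M d f) e f := by
  set T := d + 1 + (f.1 - e.1 - (d + 1 : ℕ)).val
  let c : ℕ → α := fun p =>
    if hp : p < d + 1 then e.2 ⟨p, hp⟩ else f.2 ⟨(p - T) % (d + 1), Nat.mod_lt _ d.succ_pos⟩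
  let G : ℕ → ZMod M × (Fin (d + 1) → α) := fun i => (e.1 + i, window c (d + 1) i)
  have hG : ∀ i, ReflTransGen (fun e f => cdbTarget α M d e = cdbSource α M d f) (G 0) (G i) := by
    intro i
    induction i with
    | zero => rfl
    | succ i ih => exact ih.tail (cdbTarget_window c e.1 i)
  convert hG T using 1
  · ext j
    · simp [G]
    · simp [G, c, window, Fin.is_le j]
  · ext j
    · simp [G, T]
    · simp only [G, c, window, T, add_tsub_cancel_left, Nat.mod_eq_of_lt j.2, right_eq_dite_iff]
      omega

theorem exists_periodic_window_modEq_of_neZero [Fintype α] [Nonempty α] [NeZero M] :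
    ∃ h : ℕ → α, Periodic h (Fintype.card α ^ (d + 1) * M) ∧
      ∀ x y, x ≡ y [MOD M] → window h (d + 1) x = window h (d + 1) y →
        x ≡ y [MOD Fintype.card α ^ (d + 1) * M] := by
  obtain ⟨σ, hσ, hcyc⟩ := exists_perm_isCycleOn_univ_of_connected _ _ cdbSource_rotate
    (cdb_connected (α := α) (M := M) (d := d))
  let e₀ : ZMod M × (Fin (d + 1) → α) := (0, fun _ => Classical.arbitrary α)
  let walk : ℕ → ZMod M × (Fin (d + 1) → α) := fun x => (σ ^ x) e₀
  let h : ℕ → α := fun x => (walk x).2 0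
  have hstep : ∀ x, cdbTarget α M d (walk x) = cdbSource α M d (walk (x + 1)) := by
    intro x
    simp only [walk, pow_succ', Perm.mul_apply, hσ]
  have hfst : ∀ x : ℕ, (walk x).1 = x := by
    intro x
    induction x with
    | zero => simp [walk, e₀]
    | succ x ih =>
      have := congrArg Prod.fst (hstep x)
      simp only [cdbSource, cdbTarget] at this
      push_cast
      rw [← this, ih]
  have hsnd : ∀ x, (walk x).2 = window h (d + 1) x := by
    intro x
    funext j
    induction j using Fin.induction generalizing x with
    | zero => rfl
    | succ j ih =>
      have := congrFun (congrArg Prod.snd (hstep x)) j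
      simp only [cdbSource, cdbTarget, Fin.tail, Fin.init] at this
      rw [this, ih]
      simp only [window, Fin.val_succ, Fin.val_castSucc]
      ring_nf
  have hmodEq : ∀ x y, walk x = walk y ↔ x ≡ y [MOD Fintype.card α ^ (d + 1) * M] := by
    intro x y
    rw [← Finset.coe_univ] at hcyc
    rw [hcyc.pow_apply_eq_pow_apply (Finset.mem_univ e₀), Finset.card_univ, Fintype.card_prod,
      ZMod.card, Fintype.card_fun, Fintype.card_fin, mul_comm]
  refine ⟨h, fun x => congrArg (fun e => e.2 0) ((hmodEq _ _).2 Nat.add_modEq_right), ?_⟩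
  intro x y hxy hw
  rw [← hmodEq]
  refine Prod.ext ?_ (by rw [hsnd, hsnd, hw])
  rw [hfst, hfst, ZMod.natCast_eq_natCast_iff]
  exact hxy

end CyclicDeBruijn

theorem exists_periodic_window_modEq (α : Type*) [Fintype α] [Nonempty α] (M d : ℕ) :
    ∃ h : ℕ → α, Periodic h (Fintype.card α ^ d * M) ∧
      ∀ x y, x ≡ y [MOD M] → window h d x = window h d y →
        x ≡ y [MOD Fintype.card α ^ d * M] := by
  by_cases hMd : M = 0 ∨ d = 0
  · refine ⟨fun _ => Classical.arbitrary α, fun _ => rfl, fun x y hxy _ => ?_⟩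
    rcases hMd with rfl | rfl <;> simpa using hxy
  obtain ⟨hM, hd⟩ := not_or.1 hMd
  obtain ⟨d, rfl⟩ := Nat.exists_eq_succ_of_ne_zero hd
  have : NeZero M := ⟨hM⟩
  exact exists_periodic_window_modEq_of_neZero

namespace Nat

variable {p : ℕ → Prop} [DecidablePred p]

theorem count_add_mul_of_periodic {N : ℕ} (hp : Periodic p N) (x q : ℕ) :
    count p (x + q * N) = count p x + q * count p N := by
  induction q with
  | zero => simp
  | succ q ih =>
    have hshift : (fun k => p (N + k)) = p := funext fun k => by rw [add_comm, hp]
    rw [add_one_mul, ← add_assoc, add_comm _ N, count_add]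
    simp only [hshift, ih]
    ring

theorem exists_count_eq_of_count_le_of_lt {i j m : ℕ} (hi : count p i ≤ m) (hj : m < count p j) :
    ∃ q, i ≤ q ∧ q < j ∧ p q ∧ count p q = m := by
  induction j with
  | zero => simp at hj
  | succ j ih =>
    by_cases hm : m < count p j
    · obtain ⟨q, hiq, hqj, hq⟩ := ih hm
      exact ⟨q, hiq, hqj.trans j.lt_succ_self, hq⟩
    · have hpj : p j := by
        by_contra hpj
        rw [count_succ, if_neg hpj] at hj
        omega
      have hcount : count p (j + 1) = count p j + 1 := by rw [count_succ, if_pos hpj]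
      have hij : i < j + 1 := lt_of_count_lt_count (p := p) (by omega)
      exact ⟨j, le_of_lt_succ hij, j.lt_succ_self, hpj, by omega⟩

end Nat

section FillHoles

variable {α : Type*} (u : ℕ → Option α) (h : ℕ → α)

abbrev IsHole (x : ℕ) : Prop := u x = none

def fillHoles (x : ℕ) : α := (u x).getD (h (Nat.count (IsHole u) x))

variable {u h}

theorem Function.Periodic.isHole {N : ℕ} (hu : Periodic u N) : Periodic (IsHole u) N :=
  fun x => congrArg (· = none) (hu x)

theorem fillHoles_of_isHole {x : ℕ} (hx : IsHole u x) :
    fillHoles u h x = h (Nat.count (IsHole u) x) := by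
  simp [fillHoles, hx]

theorem fillHoles_periodic {N K : ℕ} (hu : Periodic u N)
    (hh : Periodic h (K * Nat.count (IsHole u) N)) : Periodic (fillHoles u h) (K * N) := by
  intro x
  have huK : u (x + K * N) = u x := hu.nsmul K x
  simp only [fillHoles, huK, Nat.count_add_mul_of_periodic hu.isHole, hh _]

theorem window_eq_of_window_fillHoles_eq {N n d i q : ℕ} (hu : Periodic u N)
    (hd : ∀ i, Nat.count (IsHole u) (i + n) = Nat.count (IsHole u) i + d)
    (heq : window (fillHoles u h) n i = window (fillHoles u h) n (i + q * N)) :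
    window h d (Nat.count (IsHole u) i) =
      window h d (Nat.count (IsHole u) i + q * Nat.count (IsHole u) N) := by
  funext t
  obtain ⟨x, hix, hxn, hx, hcount⟩ := Nat.exists_count_eq_of_count_le_of_lt
    (p := IsHole u) (i := i) (j := i + n) (m := Nat.count (IsHole u) i + t) le_self_add
    (by rw [hd]; omega)
  have hxq : IsHole u (x + q * N) := (hu.isHole.nsmul q x).symm ▸ hx
  have hfill := congrFun heq ⟨x - i, by omega⟩
  simp only [window] at hfill ⊢
  rw [show i + (x - i) = x by omega, show i + q * N + (x - i) = x + q * N by omega,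
    fillHoles_of_isHole hx, fillHoles_of_isHole hxq, Nat.count_add_mul_of_periodic hu.isHole,
    hcount] at hfill
  rw [hfill, add_right_comm]

end FillHoles

section Upcycle

variable {a n N : ℕ} {u : ℕ → Option (Fin a)}

theorem covers_window_fillHoles (h : ℕ → Fin a) (i : ℕ) :
    Covers a n u i (window (fillHoles u h) n i) := by
  intro j
  cases hu : u (i + j) <;> simp [window, fillHoles, hu]

theorem dbEdge_window (g : ℕ → Fin a) (i : ℕ) : DBEdge a n (window g n i) (window g n (i + 1)) :=
  fun j _ => by simp only [window]; ring_nf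

theorem covers_mod_iff (hu : Periodic u N) {i : ℕ} {w : Fin n → Fin a} :
    Covers a n u (i % N) w ↔ Covers a n u i w := by
  have hshift : ∀ j, u (i % N + j) = u (i + j) := fun j => by
    conv_rhs => rw [← Nat.mod_add_div' i N, add_right_comm]
    exact (hu.nsmul _ _).symm
  simp only [Covers, hshift]

theorem IsUpcycle.modEq_of_covers (hu : IsUpcycle a n N u) (hN : 0 < N) {i i' : ℕ}
    {w : Fin n → Fin a} (hi : Covers a n u i w) (hi' : Covers a n u i' w) : i ≡ i' [MOD N] :=
  congrArg Fin.val <| (hu.2 w).unique (y₁ := ⟨i % N, Nat.mod_lt i hN⟩)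
    (y₂ := ⟨i' % N, Nat.mod_lt i' hN⟩) ((covers_mod_iff hu.1).2 hi) ((covers_mod_iff hu.1).2 hi')

theorem window_fillHoles_injOn {d : ℕ} {h : ℕ → Fin a} (hu : IsUpcycle a n N u)
    (hd : ∀ i, Nat.count (IsHole u) (i + n) = Nat.count (IsHole u) i + d)
    (hh : ∀ x y, x ≡ y [MOD Nat.count (IsHole u) N] → window h d x = window h d y →
      x ≡ y [MOD a ^ d * Nat.count (IsHole u) N]) :
    Set.InjOn (window (fillHoles u h) n) (Set.Iio (a ^ d * N)) := by
  intro i hi i' hi' heq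
  wlog hle : i ≤ i' generalizing i i'
  · exact (this hi' hi heq.symm (le_of_not_ge hle)).symm
  rw [Set.mem_Iio] at hi hi'
  have hN : 0 < N := Nat.pos_of_mul_pos_left (i.zero_le.trans_lt hi)
  have hmod := hu.modEq_of_covers hN (covers_window_fillHoles h i)
    (heq ▸ covers_window_fillHoles h i')
  obtain ⟨q, rfl⟩ : ∃ q, i' = i + q * N :=
    ⟨(i' - i) / N, by rw [Nat.div_mul_cancel ((Nat.modEq_iff_dvd' hle).1 hmod)]; omega⟩
  set M := Nat.count (IsHole u) N
  have hwin := window_eq_of_window_fillHoles_eq hu.1 hd heq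
  have hdvd : a ^ d * M ∣ q * M := by
    have := hh _ _ (Nat.add_mul_mod_self_right _ q M).symm hwin
    simpa using (Nat.modEq_iff_dvd' le_self_add).1 this
  have hq : q < a ^ d := by nlinarith
  suffices q = 0 by simp [this]
  rcases Nat.eq_zero_or_pos M with hM | hM
  · have hdM : d ≤ n * M := by
      calc d = Nat.count (IsHole u) (0 + n) := by rw [hd, Nat.count_zero, zero_add]
        _ ≤ Nat.count (IsHole u) (0 + n * N) := Nat.count_monotone _ (by nlinarith)
        _ = n * M := by
          rw [Nat.count_add_mul_of_periodic (Periodic.isHole hu.1), Nat.count_zero, zero_add]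
    obtain rfl : d = 0 := by simpa [hM] using hdM
    simpa using hq
  · exact Nat.eq_zero_of_dvd_of_lt ((Nat.mul_dvd_mul_iff_right hM).1 hdvd) hq

end Upcycle

theorem sGraph_hamiltonian_general (a n d : ℕ) (ha : 2 ≤ a) (hd : d ≤ n)
    (u : ℕ → Option (Fin a))
    (hu : IsUpcycle a n (a ^ (n - d)) u)
    (hdiam : ∀ i, ((Finset.range n).filter (fun j => u (i + j) = none)).card = d) :
    ∃ f : ℕ → (Fin n → Fin a),
      (∀ i, f (i + a ^ n) = f i) ∧
      (∀ i, SEdge a n u (f i) (f (i + 1))) ∧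
      (∀ x : Fin n → Fin a, ∃! i : Fin (a ^ n), f (i : ℕ) = x) := by
  set N := a ^ (n - d)
  have haN : a ^ n = a ^ d * N := by rw [← pow_add, Nat.add_sub_cancel' hd]
  have hholes : ∀ i, Nat.count (IsHole u) (i + n) = Nat.count (IsHole u) i + d := fun i => by
    rw [Nat.count_add, add_right_inj, Nat.count_eq_card_filter_range, hdiam]
  have : Nonempty (Fin a) := ⟨⟨0, by omega⟩⟩
  obtain ⟨h, hper, hinj⟩ := exists_periodic_window_modEq (Fin a) (Nat.count (IsHole u) N) d
  rw [Fintype.card_fin] at hper hinj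
  have hinjOn := window_fillHoles_injOn hu hholes hinj
  have hbij : Function.Bijective fun i : Fin (a ^ n) => window (fillHoles u h) n i :=
    (Fintype.bijective_iff_injective_and_card _).2
      ⟨fun i i' heq => Fin.ext (hinjOn (haN ▸ i.2) (haN ▸ i'.2) heq), by simp⟩
  exact ⟨window (fillHoles u h) n, haN ▸ periodic_window (fillHoles_periodic hu.1 hper) n,
    fun i => ⟨dbEdge_window _ i, i, covers_window_fillHoles h i, covers_window_fillHoles h (i + 1)⟩,
    hbij.existsUnique⟩

/-- For every upcycle `u` for `(Fin a)^n`, the graph `S(u)` contains a Hamilton cycle: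
a cyclic sequence of length `a ^ n` of words following edges of `S(u)` that visits
each word of `(Fin a)^n` exactly once. -/
theorem sGraph_hamiltonian (a n d : ℕ) (ha : 2 ≤ a) (hn : 0 < n) (hd : d ≤ n)
    (u : ℕ → Option (Fin a))
    (hu : IsUpcycle a n (a ^ (n - d)) u)
    (hdiam : ∀ i, ((Finset.range n).filter (fun j => u (i + j) = none)).card = d) :
    ∃ f : ℕ → (Fin n → Fin a),
      (∀ i, f (i + a ^ n) = f i) ∧
      (∀ i, SEdge a n u (f i) (f (i + 1))) ∧
      (∀ x : Fin n → Fin a, ∃! i : Fin (a ^ n), f (i : ℕ) = x) :=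
  sGraph_hamiltonian_general a n d ha hd u hu hdiam
end

section
/- For all integers a > 1, n > 1, and t ≥ n, and every word x of length n+1 over {0,...,a−1}, there exists an (a,n,t)-perfect necklace in which x appears as a (cyclic) substring. -/
/-!
An edge of the de Bruijn graph of order `n` over `Fin a`, tensored with the directed cycle
`ZMod t`, is a window of length `n` together with a phase; reading an Eulerian cycle of this
balanced, connected graph letter by letter gives an `(a, n, t)`-perfect necklace, in which the
window starting at position `i` is the `i`-th edge of the cycle.

To make `x` appear, the edges `e₁ = (x₀ ⋯ xₙ₋₁, 0)` and `e₂ = (x₁ ⋯ xₙ, 1)` must be traversed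
consecutively. Detach their common vertex into a new one through which only the transition
`e₁ e₂` passes: the graph stays balanced, and it stays connected because the phases of `e₁` and
`e₂` differ (`t ≥ 2`), so the endpoints of `e₂` are still joined by a path of three edges that
differ from `e₂` in a letter and from `e₁` in the phase.
-/

/-- `v`, viewed as a cyclic word of length `t * a ^ n`, is an `(a, n, t)`-perfect
necklace. -/
def IsPerfectNecklace (a n t : ℕ) (v : ℕ → Fin a) : Prop :=
  (∀ i, v (i + t * a ^ n) = v i) ∧
  ∀ j : Fin t, ∀ w : Fin n → Fin a,
    ∃! i : Fin (t * a ^ n), (i : ℕ) % t = (j : ℕ) ∧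
      ∀ m : Fin n, v ((i : ℕ) + (m : ℕ)) = w m

open Finset Relation

theorem List.exists_coe_eq_coe_cons_of_mem {α : Type*} {l : List α} {a : α} (h : a ∈ l) :
    ∃ l' : List α, (l : Cycle α) = (a :: l' : List α) := by
  obtain ⟨s, t, rfl⟩ := List.append_of_mem h
  exact ⟨t ++ s, Cycle.coe_eq_coe.mpr List.isRotated_append⟩

namespace Multidigraph

variable {E V : Type*} (src tgt : E → V)

def Joined (p q : V) : Prop := ∃ e, src e = p ∧ tgt e = q

def Consecutive (e f : E) : Prop := tgt e = src f

def IsTrail (l : List E) : Prop := l.Nodup ∧ l.IsChain (Consecutive src tgt)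

def Balanced [Fintype E] [DecidableEq V] : Prop :=
  ∀ p, #{e | src e = p} = #{e | tgt e = p}

structure IsEulerianCycle [Fintype E] (W : ℕ → E) : Prop where
  periodic : Function.Periodic W (Fintype.card E)
  bijective : Function.Bijective fun i : Fin (Fintype.card E) => W i
  step : ∀ i, tgt (W i) = src (W (i + 1))

variable {src tgt}

theorem tail_map_src_eq_dropLast_map_tgt {l : List E} (hl : l.IsChain (Consecutive src tgt)) :
    (l.map src).tail = (l.map tgt).dropLast := by
  induction l with
  | nil => rfl
  | cons e l ih =>
    cases l with
    | nil => rfl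
    | cons f l =>
      obtain ⟨hef, hl⟩ := List.isChain_cons_cons.mp hl
      have h := ih hl
      simp only [List.map_cons, List.tail_cons, List.dropLast_cons_cons] at h ⊢
      rw [h, hef]

theorem count_map_src_add [DecidableEq V] {l : List E} (hl : l.IsChain (Consecutive src tgt))
    (hne : l ≠ []) (p : V) :
    (l.map src).count p + (if tgt (l.getLast hne) = p then 1 else 0) =
      (l.map tgt).count p + (if src (l.head hne) = p then 1 else 0) := by
  have hsrc : l.map src = src (l.head hne) :: (l.map tgt).dropLast := by
    rw [← tail_map_src_eq_dropLast_map_tgt hl, ← List.head_map (f := src) (by simpa using hne)]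
    exact (List.cons_head_tail _).symm
  have htgt : l.map tgt = (l.map tgt).dropLast ++ [tgt (l.getLast hne)] := by
    rw [← List.getLast_map (f := tgt) (by simpa using hne)]
    exact (List.dropLast_append_getLast _).symm
  conv_lhs => rw [hsrc]
  conv_rhs => rw [htgt]
  simp only [List.count_cons, List.count_append, List.count_nil, beq_iff_eq]
  omega

theorem _root_.List.Nodup.count_map_eq_card_filter [DecidableEq E] [DecidableEq V] {l : List E}
    (hl : l.Nodup) (f : E → V) (p : V) : (l.map f).count p = #{e ∈ l.toFinset | f e = p} := by
  rw [List.count_eq_countP, List.countP_map, List.countP_eq_length_filter,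
    ← List.toFinset_card_of_nodup (hl.filter _), List.toFinset_filter]
  simp

theorem IsTrail.concat {l : List E} (hl : IsTrail src tgt l) (hne : l ≠ []) {q : E} (hq : q ∉ l)
    (h : Consecutive src tgt (l.getLast hne) q) : IsTrail src tgt (l ++ [q]) :=
  ⟨hl.1.append (List.nodup_singleton q) (by simpa using hq),
    hl.2.append (List.isChain_singleton q) (by simp [List.getLast?_eq_some_getLast hne, h])⟩

theorem IsTrail.exists_concat_of_not_consecutive [Fintype E] [DecidableEq E] [DecidableEq V]
    (hbal : Balanced src tgt) {l : List E} (hl : IsTrail src tgt l) (hne : l ≠ [])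
    (hopen : ¬ Consecutive src tgt (l.getLast hne) (l.head hne)) :
    ∃ q ∉ l, Consecutive src tgt (l.getLast hne) q := by
  -- `l` enters its end vertex `p` once more often than it leaves it
  set p := tgt (l.getLast hne)
  by_contra! hall
  have hcount := count_map_src_add hl.2 hne p
  rw [if_pos rfl, if_neg (Ne.symm hopen)] at hcount
  have hsrc : #{e | src e = p} ≤ (l.map src).count p := by
    rw [hl.1.count_map_eq_card_filter]
    refine card_le_card fun e he => ?_
    simp only [mem_filter, mem_univ, true_and, List.mem_toFinset] at he ⊢
    exact ⟨by_contra fun h => hall e h he.symm, he⟩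
  have htgt : (l.map tgt).count p ≤ #{e | tgt e = p} := by
    rw [hl.1.count_map_eq_card_filter]
    exact card_le_card (filter_subset_filter _ (subset_univ _))
  have := hbal p
  omega

section Closed

variable {l : List E} (hcyc : Cycle.Chain (Consecutive src tgt) (l : Cycle E))
include hcyc

theorem exists_perm_isChain_cons_append {p : E} (hp : p ∈ l) :
    ∃ l', (p :: l').Perm l ∧ (p :: (l' ++ [p])).IsChain (Consecutive src tgt) := by
  obtain ⟨l', hl'⟩ := List.exists_coe_eq_coe_cons_of_mem hp
  refine ⟨l', (Cycle.coe_eq_coe.mp hl').perm.symm, ?_⟩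
  rwa [hl', Cycle.chain_coe_cons] at hcyc

theorem exists_pred_and_succ {p : E} (hp : p ∈ l) :
    (∃ p' ∈ l, Consecutive src tgt p' p) ∧ ∃ p' ∈ l, Consecutive src tgt p p' := by
  obtain ⟨l', hperm, hch⟩ := exists_perm_isChain_cons_append hcyc hp
  refine ⟨⟨(p :: l').getLast (List.cons_ne_nil _ _), hperm.subset (List.getLast_mem _),
    (hch : ((p :: l') ++ [p]).IsChain _).rel_getLast_head_of_append _ (List.cons_ne_nil _ _)⟩, ?_⟩
  cases l' with
  | nil => exact ⟨p, hp, by simpa using hch⟩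
  | cons a l' => exact ⟨a, hperm.subset (by simp), (List.isChain_cons_cons.mp hch).1⟩

theorem exists_longer_trail (hnd : l.Nodup) {p q : E} (hp : p ∈ l) (hq : q ∉ l)
    (hpq : Consecutive src tgt p q ∨ Consecutive src tgt q p) :
    ∃ l', IsTrail src tgt l' ∧ l.length < l'.length := by
  obtain ⟨l', hperm, hch⟩ := exists_perm_isChain_cons_append hcyc hp
  have hnd' : (p :: l').Nodup := hperm.nodup_iff.mpr hnd
  have hq' : q ∉ p :: l' := fun h => hq (hperm.subset h)
  rcases hpq with hpq | hqp
  · refine ⟨l' ++ [p] ++ [q], ⟨?_, ?_⟩, ?_⟩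
    · have hperm' : (l' ++ [p] ++ [q]).Perm (q :: p :: l') := by
        simp only [List.append_assoc, List.singleton_append]
        exact List.perm_append_comm.trans (List.Perm.swap _ _ _)
      exact hperm'.nodup_iff.mpr (List.nodup_cons.mpr ⟨hq', hnd'⟩)
    · exact (hch.tail : (l' ++ [p]).IsChain _).append (List.isChain_singleton q)
        (by simpa using hpq)
    · simp [← hperm.length_eq]
  · refine ⟨q :: p :: l', ⟨List.nodup_cons.mpr ⟨hq', hnd'⟩, ?_⟩, by simp [← hperm.length_eq]⟩
    exact List.isChain_cons_cons.mpr ⟨hqp, hch.prefix ⟨[p], by simp⟩⟩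

theorem exists_consecutive_mem_not_mem (hconn : ∀ p q, EqvGen (Joined src tgt) p q) {e f : E}
    (he : e ∈ l) (hf : f ∉ l) :
    ∃ p ∈ l, ∃ q ∉ l, Consecutive src tgt p q ∨ Consecutive src tgt q p := by
  -- otherwise the vertices on `l` form a union of connected components
  by_contra! hsep
  let T : Set V := {x | ∃ p ∈ l, src p = x}
  have hout : ∀ e ∉ l, src e ∉ T ∧ tgt e ∉ T := by
    refine fun e he => ⟨?_, ?_⟩
    · rintro ⟨p, hp, hpe⟩
      obtain ⟨p', hp', hp'p⟩ := (exists_pred_and_succ hcyc hp).1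
      exact (hsep p' hp' e he).1 (hp'p.trans hpe)
    · rintro ⟨p, hp, hpe⟩
      exact (hsep p hp e he).2 hpe.symm
  have hjoin : ∀ x y, Joined src tgt x y → (x ∈ T ↔ y ∈ T) := by
    rintro _ _ ⟨e, rfl, rfl⟩
    by_cases he : e ∈ l
    · obtain ⟨p', hp', hep'⟩ := (exists_pred_and_succ hcyc he).2
      exact iff_of_true ⟨e, he, rfl⟩ ⟨p', hp', hep'.symm⟩
    · exact iff_of_false (hout e he).1 (hout e he).2
  have hinv : ∀ x y, EqvGen (Joined src tgt) x y → (x ∈ T ↔ y ∈ T) := by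
    intro x y h
    induction h with
    | rel x y h => exact hjoin x y h
    | refl => rfl
    | symm _ _ _ ih => exact ih.symm
    | trans _ _ _ _ _ ih₁ ih₂ => exact ih₁.trans ih₂
  exact (hout f hf).1 ((hinv _ _ (hconn (src e) (src f))).mp ⟨e, he, rfl⟩)

end Closed

theorem exists_isEulerianCycle_of_cycle [Fintype E] {l : List E} (hnd : l.Nodup)
    (hall : ∀ e, e ∈ l) (hcyc : Cycle.Chain (Consecutive src tgt) (l : Cycle E)) (hne : l ≠ []) :
    ∃ W, IsEulerianCycle src tgt W := by
  classical
  have hpos : 0 < l.length := List.length_pos_iff.mpr hne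
  have hcard : Fintype.card E = l.length :=
    (Fintype.card_congr (hnd.getEquivOfForallMemList l hall)).symm.trans (Fintype.card_fin _)
  have hclosed : ∀ j (hj : j < l.length),
      Consecutive src tgt l[j] (l[(j + 1) % l.length]'(Nat.mod_lt _ hpos)) := by
    rw [Cycle.chain_ne_nil _ hne] at hcyc
    intro j hj
    rcases Nat.lt_or_ge (j + 1) l.length with h | h
    · have := hcyc.getElem (j + 1) (by simpa using h)
      simp only [List.getElem_cons_succ] at this
      simpa only [Nat.mod_eq_of_lt h] using this
    · obtain rfl : j = l.length - 1 := by omega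
      simpa [List.getLast_eq_getElem, Nat.sub_add_cancel hpos] using
        hcyc.getElem 0 (by simpa using hpos)
  refine ⟨fun i => l[i % l.length]'(Nat.mod_lt _ hpos), ⟨?_, ?_, ?_⟩⟩
  · intro i
    simp [hcard]
  · refine (Fintype.bijective_iff_injective_and_card _).mpr ⟨fun i j hij => ?_, Fintype.card_fin _⟩
    have hi : (i : ℕ) < l.length := hcard ▸ i.isLt
    have hj : (j : ℕ) < l.length := hcard ▸ j.isLt
    simp only [Nat.mod_eq_of_lt hi, Nat.mod_eq_of_lt hj, hnd.getElem_inj_iff] at hij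
    exact Fin.ext hij
  · intro i
    have := hclosed (i % l.length) (Nat.mod_lt _ hpos)
    simp only [Nat.mod_add_mod] at this
    exact this

theorem exists_longest_trail [Fintype E] :
    ∃ l, IsTrail src tgt l ∧ ∀ l', IsTrail src tgt l' → l'.length ≤ l.length :=
  Set.exists_max_image {l | IsTrail src tgt l} List.length
    ((List.finite_length_le E (Fintype.card E)).subset fun _ hl => hl.1.length_le_card)
    ⟨[], List.nodup_nil, List.isChain_nil⟩

theorem exists_isEulerianCycle [Fintype E] [Nonempty E] [DecidableEq E] [DecidableEq V]
    (hbal : Balanced src tgt) (hconn : ∀ p q, EqvGen (Joined src tgt) p q) :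
    ∃ W, IsEulerianCycle src tgt W := by
  obtain ⟨l, hl, hmax⟩ := exists_longest_trail (src := src) (tgt := tgt)
  have hne : l ≠ [] := by
    rintro rfl
    simpa using hmax [Classical.arbitrary E] ⟨List.nodup_singleton _, List.isChain_singleton _⟩
  have hcyc : Cycle.Chain (Consecutive src tgt) (l : Cycle E) := by
    rw [Cycle.chain_ne_nil _ hne]
    refine List.isChain_cons.mpr ⟨?_, hl.2⟩
    rw [List.head?_eq_some_head hne]
    rintro _ ⟨⟩
    by_contra hopen
    obtain ⟨q, hq, hlq⟩ := hl.exists_concat_of_not_consecutive hbal hne hopen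
    simpa using hmax _ (hl.concat hne hq hlq)
  have hall : ∀ e, e ∈ l := by
    by_contra! ⟨q, hq⟩
    obtain ⟨p, hp, q, hq, hpq⟩ :=
      exists_consecutive_mem_not_mem hcyc hconn (List.head_mem hne) hq
    obtain ⟨l', hl', hlen⟩ := exists_longer_trail hcyc hl.1 hp hq hpq
    exact (hmax l' hl').not_gt hlen
  exact exists_isEulerianCycle_of_cycle hl.1 hall hcyc hne

section Split

variable [DecidableEq E] (src tgt) (e₁ e₂ : E)

/- The vertex `tgt e₁ = src e₂` is split off into a new vertex `none`, entered only by `e₁` and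
left only by `e₂`, so that Eulerian cycles of the split graph pass through `e₁ e₂` consecutively. -/

def splitSrc (e : E) : Option V := if e = e₂ then none else some (src e)

def splitTgt (e : E) : Option V := if e = e₁ then none else some (tgt e)

variable {src tgt e₁ e₂}

theorem balanced_split [Fintype E] [DecidableEq V] (hbal : Balanced src tgt)
    (h12 : tgt e₁ = src e₂) : Balanced (splitSrc src e₂) (splitTgt tgt e₁) := by
  rintro (_ | p)
  · simp [splitSrc, splitTgt, filter_eq']
  · have hs : ({e | splitSrc src e₂ e = some p} : Finset E) =
        ({e | src e = p} : Finset E).erase e₂ := by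
      ext e; by_cases he : e = e₂ <;> simp [splitSrc, he]
    have ht : ({e | splitTgt tgt e₁ e = some p} : Finset E) =
        ({e | tgt e = p} : Finset E).erase e₁ := by
      ext e; by_cases he : e = e₁ <;> simp [splitTgt, he]
    rw [hs, ht, card_erase_eq_ite, card_erase_eq_ite, hbal p]
    simp [h12]

theorem eqvGen_joined_split (hconn : ∀ p q, EqvGen (Joined src tgt) p q)
    (h12 : tgt e₁ = src e₂) (hne : e₁ ≠ e₂)
    (hlocal : EqvGen (Joined (splitSrc src e₂) (splitTgt tgt e₁)) (some (src e₂)) (some (tgt e₂)))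
    (P Q : Option V) : EqvGen (Joined (splitSrc src e₂) (splitTgt tgt e₁)) P Q := by
  have hnone : EqvGen (Joined (splitSrc src e₂) (splitTgt tgt e₁)) none (some (tgt e₂)) :=
    .rel _ _ ⟨e₂, if_pos rfl, if_neg hne.symm⟩
  have hedge : ∀ p q, Joined src tgt p q →
      EqvGen (Joined (splitSrc src e₂) (splitTgt tgt e₁)) (some p) (some q) := by
    rintro _ _ ⟨e, rfl, rfl⟩
    by_cases h1 : e = e₁
    · subst h1
      refine .trans _ _ _ (.rel _ _ ⟨e, if_neg hne, if_pos rfl⟩) (.trans _ _ _ hnone ?_)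
      rw [h12]
      exact .symm _ _ hlocal
    by_cases h2 : e = e₂
    · exact h2 ▸ hlocal
    · exact .rel _ _ ⟨e, if_neg h2, if_neg h1⟩
  have hlift : ∀ p q, EqvGen (Joined src tgt) p q →
      EqvGen (Joined (splitSrc src e₂) (splitTgt tgt e₁)) (some p) (some q) := by
    intro p q h
    induction h with
    | rel p q h => exact hedge p q h
    | refl => exact .refl _
    | symm _ _ _ ih => exact .symm _ _ ih
    | trans _ _ _ _ _ ih₁ ih₂ => exact .trans _ _ _ ih₁ ih₂
  have hbase : ∀ P, EqvGen (Joined (splitSrc src e₂) (splitTgt tgt e₁)) P (some (tgt e₂)) := by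
    rintro (_ | p)
    · exact hnone
    · exact hlift _ _ (hconn _ _)
  exact .trans _ _ _ (hbase P) (.symm _ _ (hbase Q))

theorem splitTgt_eq_splitSrc (h12 : tgt e₁ = src e₂) {e f : E}
    (h : splitTgt tgt e₁ e = splitSrc src e₂ f) : tgt e = src f ∧ (e = e₁ → f = e₂) := by
  unfold splitTgt splitSrc at h
  by_cases he : e = e₁ <;> by_cases hf : f = e₂ <;> simp_all

theorem exists_isEulerianCycle_consecutive [Fintype E] [DecidableEq V]
    (hbal : Balanced src tgt) (hconn : ∀ p q, EqvGen (Joined src tgt) p q)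
    (h12 : tgt e₁ = src e₂) (hne : e₁ ≠ e₂)
    (hlocal : EqvGen (Joined (splitSrc src e₂) (splitTgt tgt e₁)) (some (src e₂)) (some (tgt e₂))) :
    ∃ W, IsEulerianCycle src tgt W ∧ ∃ i, W i = e₁ ∧ W (i + 1) = e₂ := by
  have : Nonempty E := ⟨e₁⟩
  obtain ⟨W, hW⟩ := exists_isEulerianCycle (balanced_split hbal h12)
    (eqvGen_joined_split hconn h12 hne hlocal)
  have hstep := fun i => splitTgt_eq_splitSrc h12 (hW.step i)
  obtain ⟨i, hi⟩ := hW.bijective.2 e₁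
  exact ⟨W, ⟨hW.periodic, hW.bijective, fun i => (hstep i).1⟩, i, hi, (hstep i).2 hi⟩

end Split

end Multidigraph

namespace DeBruijn

open Multidigraph

variable {α : Type*} {k t : ℕ}

/- The de Bruijn graph on words of length `k` over `α`, tensored with the directed cycle `ZMod t`:
the edge `(w, c)` leads from the prefix of `w` to its suffix and advances the phase `c`. -/

def src (e : (Fin (k + 1) → α) × ZMod t) : (Fin k → α) × ZMod t := (Fin.init e.1, e.2)

def tgt (e : (Fin (k + 1) → α) × ZMod t) : (Fin k → α) × ZMod t := (Fin.tail e.1, e.2 + 1)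

theorem card_filter_src_eq [Fintype α] [DecidableEq α] [NeZero t] (p : (Fin k → α) × ZMod t) :
    #{e | src e = p} = Fintype.card α := by
  rw [← Fintype.card_subtype]
  exact Fintype.card_congr
    { toFun e := e.1.1 (Fin.last k)
      invFun b := ⟨(Fin.snoc p.1 b, p.2), by simp [src]⟩
      left_inv := by rintro ⟨⟨w, c⟩, rfl⟩; simp [src]
      right_inv b := by simp }

theorem card_filter_tgt_eq [Fintype α] [DecidableEq α] [NeZero t] (p : (Fin k → α) × ZMod t) :
    #{e | tgt e = p} = Fintype.card α := by
  rw [← Fintype.card_subtype]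
  exact Fintype.card_congr
    { toFun e := e.1.1 0
      invFun b := ⟨(Fin.cons b p.1, p.2 - 1), by simp [tgt]⟩
      left_inv := by rintro ⟨⟨w, c⟩, rfl⟩; simp [tgt]
      right_inv b := by simp }

theorem balanced [Fintype α] [DecidableEq α] [NeZero t] :
    Balanced (src : (Fin (k + 1) → α) × ZMod t → _) tgt := fun p => by
  rw [card_filter_src_eq, card_filter_tgt_eq]

theorem eqvGen_joined_window (u : ℕ → α) (c : ZMod t) (L : ℕ) :
    EqvGen (Joined (src (k := k)) tgt) (fun m => u m, c) (fun m => u (L + m), c + L) := by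
  induction L with
  | zero => simpa using EqvGen.refl _
  | succ L ih =>
    refine .trans _ _ _ ih (.rel _ _ ⟨(fun m => u (L + m), c + L), ?_, ?_⟩)
    · rfl
    · ext m
      · simp [tgt, Fin.tail, add_assoc, add_comm 1]
      · simp [tgt, add_assoc]

theorem eqvGen_joined [Nonempty α] [NeZero t] (p q : (Fin k → α) × ZMod t) :
    EqvGen (Joined src tgt) p q := by
  obtain ⟨y, c⟩ := p
  obtain ⟨z, d⟩ := q
  -- walk along a stream that reads `y` at position `0` and `z` at position `L ≡ d - c`
  set L := k + (d - c - k).val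
  let u : ℕ → α := fun i =>
    if h : i < k then y ⟨i, h⟩ else if h' : i - L < k then z ⟨i - L, h'⟩ else Classical.arbitrary α
  convert eqvGen_joined_window u c L using 2
  · funext m
    simp [u]
  · funext m
    have hm : ¬ L + m < k := by omega
    simp [u, hm]
  · simp [L]

theorem eqvGen_joined_split_src_tgt [DecidableEq α] [Nontrivial α]
    {e₁ e₂ : (Fin (k + 1) → α) × ZMod t}
    (hphase : e₁.2 ≠ e₂.2) :
    EqvGen (Joined (splitSrc src e₂) (splitTgt tgt e₁)) (some (src e₂)) (some (tgt e₂)) := by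
  obtain ⟨s, j⟩ := e₂
  have hjoin : ∀ f : (Fin (k + 1) → α) × ZMod t, f.2 = j → f.1 ≠ s →
      EqvGen (Joined (splitSrc src (s, j)) (splitTgt tgt e₁)) (some (src f)) (some (tgt f)) := by
    rintro ⟨w, _⟩ rfl hw
    refine .rel _ _ ⟨(w, _), if_neg fun h => hw (congrArg Prod.fst h), if_neg ?_⟩
    rintro rfl
    exact hphase rfl
  obtain ⟨b, hb⟩ := exists_ne (s (Fin.last k))
  obtain ⟨c, hc⟩ := exists_ne (s 0)
  have hlast : ∀ w : Fin (k + 1) → α, Function.update w (Fin.last k) b ≠ s :=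
    fun w h => hb (by simpa using congrFun h (Fin.last k))
  have h₁ := hjoin (Function.update s (Fin.last k) b, j) rfl (hlast s)
  have h₂ := hjoin (Function.update (Function.update s 0 c) (Fin.last k) b, j) rfl (hlast _)
  have h₄ := hjoin (Function.update s 0 c, j) rfl fun h => hc (by simpa using congrFun h 0)
  have htail : Fin.tail (Function.update (Function.update s 0 c) (Fin.last k) b) =
      Fin.tail (Function.update s (Fin.last k) b) := by
    by_cases h0 : (0 : Fin (k + 1)) = Fin.last k
    · have hk : k = 0 := by simpa using (congrArg Fin.val h0).symm
      subst hk
      exact funext finZeroElim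
    · rw [Function.update_comm h0, Fin.tail_update_zero]
  simp only [src, tgt, Fin.init_update_last, Fin.tail_update_zero, htail] at h₁ h₂ h₄
  exact h₁.trans _ _ _ (.trans _ _ _ (.symm _ _ h₂) h₄)

section Necklace

variable {W : ℕ → (Fin (k + 1) → α) × ZMod t} (hstep : ∀ i, tgt (W i) = src (W (i + 1)))
include hstep

theorem fst_apply_add_zero (i : ℕ) (m : Fin (k + 1)) : (W (i + m)).1 0 = (W i).1 m := by
  obtain ⟨m, hm⟩ := m
  induction m generalizing i with
  | zero => rfl
  | succ m ih =>
    have h := congrFun (congrArg Prod.fst (hstep i)) ⟨m, by omega⟩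
    simp only [src, tgt, Fin.tail, Fin.init] at h
    show (W (i + (m + 1))).1 0 = _
    rw [← add_assoc, add_right_comm]
    exact (ih (i + 1) (by omega)).trans h.symm

theorem snd_apply (i : ℕ) : (W i).2 = (W 0).2 + i := by
  induction i with
  | zero => simp
  | succ i ih =>
    have h := congrArg Prod.snd (hstep i)
    simp only [src, tgt] at h
    rw [← h, ih]
    push_cast
    ring

end Necklace

theorem isPerfectNecklace {a k t : ℕ} [NeZero t] {W : ℕ → (Fin (k + 1) → Fin a) × ZMod t}
    (hW : IsEulerianCycle src tgt W) : IsPerfectNecklace a (k + 1) t fun i => (W i).1 0 := by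
  have hcard : Fintype.card ((Fin (k + 1) → Fin a) × ZMod t) = t * a ^ (k + 1) := by
    simp [mul_comm]
  refine ⟨fun i => by simp only [← hcard, hW.periodic i], fun j w => ?_⟩
  have hiff : ∀ i : ℕ, (i % t = j ∧ ∀ m : Fin (k + 1), (W (i + m)).1 0 = w m) ↔
      W i = (w, (W 0).2 + j) := by
    intro i
    simp only [fst_apply_add_zero hW.step, Prod.ext_iff, funext_iff, snd_apply hW.step i,
      add_right_inj, ZMod.natCast_eq_natCast_iff', Nat.mod_eq_of_lt j.isLt]
    exact and_comm
  rw [← hcard]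
  simpa only [hiff] using hW.bijective.existsUnique (w, (W 0).2 + j)

end DeBruijn

/-- For all `a > 1`, `n > 1`, `t ≥ n`, every word of length `n + 1` over `{0,…,a-1}`
appears as a (cyclic) substring of some `(a, n, t)`-perfect necklace. -/
theorem word_in_some_perfectNecklace (a n t : ℕ) (ha : 1 < a) (hn : 1 < n) (ht : n ≤ t)
    (x : Fin (n + 1) → Fin a) :
    ∃ v : ℕ → Fin a, IsPerfectNecklace a n t v ∧
      ∃ i : ℕ, ∀ m : Fin (n + 1), v (i + (m : ℕ)) = x m := by
  obtain ⟨k, rfl⟩ : ∃ k, n = k + 1 := ⟨n - 1, by omega⟩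
  have : Fact (1 < t) := ⟨by omega⟩
  have : Nontrivial (Fin a) := Fin.nontrivial_iff_two_le.mpr ha
  have hphase : (0 : ZMod t) ≠ 1 := zero_ne_one
  obtain ⟨W, hW, i, h₁, h₂⟩ := Multidigraph.exists_isEulerianCycle_consecutive
    DeBruijn.balanced DeBruijn.eqvGen_joined
    (e₁ := (Fin.init x, 0)) (e₂ := (Fin.tail x, 1))
    (by simp [DeBruijn.src, DeBruijn.tgt, Fin.tail_init_eq_init_tail])
    (fun h => hphase (congrArg Prod.snd h)) (DeBruijn.eqvGen_joined_split_src_tgt hphase)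
  refine ⟨_, DeBruijn.isPerfectNecklace hW, i, Fin.lastCases ?_ fun m => ?_⟩
  · have := DeBruijn.fst_apply_add_zero hW.step (i + 1) (Fin.last k)
    simp only [h₂, Fin.val_last] at this
    rw [Fin.val_last, ← add_assoc, add_right_comm, this]
    rfl
  · rw [Fin.val_castSucc, DeBruijn.fst_apply_add_zero hW.step, h₁]
    rfl
end

section
/- Every upcycle u for A^n with diamondicity d has the partial subwords distribution property: for every k ∈ {1,...,n} and every word v ∈ A^k, the expected multiplicity E(u,v) equals a^{n−d−k}, where a = |A|. -/
instance (a n : ℕ) (u : ℕ → Option (Fin a)) (i : ℕ) (w : Fin n → Fin a) :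
    Decidable (Covers a n u i w) := by
  unfold Covers; infer_instance

lemma card_fin_filter (n : ℕ) (p : ℕ → Prop) [DecidablePred p] :
    (Finset.univ.filter (fun j : Fin n => p (j:ℕ))).card
      = ((Finset.range n).filter p).card := by
  rw [Finset.card_filter, Finset.card_filter]
  exact Fin.sum_univ_eq_sum_range (fun j => if p j then 1 else 0) n

lemma prod_if_pow (n a : ℕ) (p : Fin n → Prop) [DecidablePred p] :
    (∏ j : Fin n, if p (j:Fin n) then 1 else a)
      = a ^ (Finset.univ.filter (fun j : Fin n => ¬ p j)).card := by
  have h1 : ∀ j : Fin n, (if p j then 1 else a) = a ^ (if p j then 0 else 1) := by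
    intro j; split <;> simp
  rw [Finset.prod_congr rfl (fun j _ => h1 j), Finset.prod_pow_eq_pow_sum]
  congr 1
  rw [Finset.card_filter]
  refine Finset.sum_congr rfl (fun j _ => ?_)
  by_cases hj : p j <;> simp [hj]

lemma prefix_count (a n k : ℕ) (hkn : k ≤ n) (v : Fin k → Fin a) :
    (Finset.univ.filter (fun w : Fin n → Fin a =>
      ∀ j : Fin k, w ⟨j, lt_of_lt_of_le j.2 hkn⟩ = v j)).card = a ^ (n - k) := by
  classical
  set S : Fin n → Finset (Fin a) := fun j =>
    if h : (j:ℕ) < k then {v ⟨j, h⟩} else Finset.univ with hS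
  have hset : (Finset.univ.filter (fun w : Fin n → Fin a =>
      ∀ j : Fin k, w ⟨j, lt_of_lt_of_le j.2 hkn⟩ = v j)) = Fintype.piFinset S := by
    ext w
    simp only [Finset.mem_filter, Finset.mem_univ, true_and, Fintype.mem_piFinset, hS]
    constructor
    · intro h j
      by_cases hj : (j:ℕ) < k
      · simp only [dif_pos hj, Finset.mem_singleton]
        have := h ⟨j, hj⟩
        simpa using this
      · simp [dif_neg hj]
    · intro h j
      have := h ⟨j, lt_of_lt_of_le j.2 hkn⟩
      simp only [dif_pos j.2, Finset.mem_singleton] at this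
      simpa using this
  rw [hset, Fintype.card_piFinset]
  have : ∀ j : Fin n, (S j).card = if (j:ℕ) < k then 1 else a := by
    intro j
    by_cases hj : (j:ℕ) < k <;> simp [hS, hj]
  rw [Finset.prod_congr rfl (fun j _ => this j), prod_if_pow]
  congr 1
  rw [card_fin_filter n (fun j => ¬ j < k)]
  have : (Finset.range n).filter (fun j => ¬ j < k) = Finset.Ico k n := by
    ext j; simp [Finset.mem_Ico]; omega
  rw [this, Nat.card_Ico]

lemma count_ext (a n k d : ℕ) (hkn : k ≤ n) (u : ℕ → Option (Fin a)) (i : ℕ)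
    (hdiam : ((Finset.range n).filter (fun j => u (i + j) = none)).card = d)
    (v : Fin k → Fin a) :
    (Finset.univ.filter (fun w : Fin n → Fin a =>
      Covers a n u i w ∧ ∀ j : Fin k, w ⟨j, lt_of_lt_of_le j.2 hkn⟩ = v j)).card
    = if Covers a k u i v then
        a ^ (d - ((Finset.range k).filter (fun j => u (i + j) = none)).card)
      else 0 := by
  classical
  set S : Fin n → Finset (Fin a) := fun j =>
    (u (i + (j:ℕ))).elim
      (if h : (j:ℕ) < k then {v ⟨j, h⟩} else Finset.univ)
      (fun c => if h : (j:ℕ) < k then (if c = v ⟨j, h⟩ then {c} else ∅) else {c}) with hS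
  have hset : (Finset.univ.filter (fun w : Fin n → Fin a =>
      Covers a n u i w ∧ ∀ j : Fin k, w ⟨j, lt_of_lt_of_le j.2 hkn⟩ = v j))
      = Fintype.piFinset S := by
    ext w
    simp only [Finset.mem_filter, Finset.mem_univ, true_and, Fintype.mem_piFinset, hS]
    constructor
    · rintro ⟨hc, hp⟩ j
      rcases hc j with hj | hj
      · rw [hj]
        by_cases h : (j:ℕ) < k
        · simp only [Option.elim, dif_pos h, Finset.mem_singleton]
          have := hp ⟨j, h⟩; simpa using this
        · simp [Option.elim, dif_neg h]
      · rw [hj]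
        by_cases h : (j:ℕ) < k
        · have hw : w j = v ⟨j, h⟩ := by have := hp ⟨j, h⟩; simpa using this
          simp [Option.elim, dif_pos h, hw]
        · simp [Option.elim, dif_neg h]
    · intro hmem
      constructor
      · intro j
        have := hmem j
        cases hu : u (i + (j:ℕ)) with
        | none => exact Or.inl rfl
        | some c =>
          rw [hu] at this
          simp only [Option.elim] at this
          by_cases h : (j:ℕ) < k
          · rw [dif_pos h] at this
            by_cases hc : c = v ⟨j, h⟩
            · rw [if_pos hc, Finset.mem_singleton] at this
              exact Or.inr (congrArg some this.symm)
            · rw [if_neg hc] at this; exact absurd this (Finset.notMem_empty _)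
          · rw [dif_neg h, Finset.mem_singleton] at this
            exact Or.inr (congrArg some this.symm)
      · intro j
        have := hmem ⟨j, lt_of_lt_of_le j.2 hkn⟩
        cases hu : u (i + (j:ℕ)) with
        | none =>
          rw [hu] at this
          simp only [Option.elim, dif_pos j.2, Finset.mem_singleton] at this
          simpa using this
        | some c =>
          rw [hu] at this
          simp only [Option.elim, dif_pos j.2] at this
          by_cases hc : c = v ⟨(j:ℕ), j.2⟩
          · rw [if_pos hc, Finset.mem_singleton] at this
            rw [this, hc]
          · rw [if_neg hc] at this; exact absurd this (Finset.notMem_empty _)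
  rw [hset, Fintype.card_piFinset]
  by_cases hcov : Covers a k u i v
  · rw [if_pos hcov]
    have hcard : ∀ j : Fin n, (S j).card =
        if ¬ (u (i + (j:ℕ)) = none ∧ ¬ (j:ℕ) < k) then 1 else a := by
      intro j
      cases hu : u (i + (j:ℕ)) with
      | none =>
        by_cases h : (j:ℕ) < k
        · simp [hS, hu, Option.elim, dif_pos h, h]
        · simp [hS, hu, Option.elim, dif_neg h, h]
      | some c =>
        by_cases h : (j:ℕ) < k
        · have : c = v ⟨j, h⟩ := by
            rcases hcov ⟨j, h⟩ with h1 | h1 <;> simp [hu] at h1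
            exact h1
          simp [hS, hu, Option.elim, dif_pos h, this]
        · simp [hS, hu, Option.elim, dif_neg h]
    rw [Finset.prod_congr rfl (fun j _ => hcard j), prod_if_pow]
    congr 1
    have h2 : (Finset.univ.filter (fun j : Fin n =>
        ¬¬(u (i + (j:ℕ)) = none ∧ ¬ (j:ℕ) < k))).card
        = ((Finset.range n).filter (fun j => u (i + j) = none ∧ ¬ j < k)).card := by
      rw [← card_fin_filter n (fun j => u (i + j) = none ∧ ¬ j < k)]
      congr 1
      ext j
      simp only [Finset.mem_filter, Finset.mem_univ, true_and, not_not]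
    rw [h2]
    have hsplit : ((Finset.range n).filter (fun j => u (i + j) = none)).card
        = ((Finset.range k).filter (fun j => u (i + j) = none)).card
          + ((Finset.range n).filter (fun j => u (i + j) = none ∧ ¬ j < k)).card := by
      rw [← Finset.card_union_of_disjoint]
      · congr 1
        ext j
        simp only [Finset.mem_union, Finset.mem_filter, Finset.mem_range]
        constructor
        · rintro ⟨hj, hnone⟩
          by_cases h : j < k
          · exact Or.inl ⟨h, hnone⟩
          · exact Or.inr ⟨hj, hnone, h⟩
        · rintro (⟨h, hnone⟩ | ⟨hj, hnone, _⟩)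
          · exact ⟨lt_of_lt_of_le h hkn, hnone⟩
          · exact ⟨hj, hnone⟩
      · rw [Finset.disjoint_left]
        rintro j hj1 hj2
        simp only [Finset.mem_filter, Finset.mem_range] at hj1 hj2
        exact hj2.2.2 hj1.1
    omega
  · rw [if_neg hcov]
    rw [Covers] at hcov
    push_neg at hcov
    obtain ⟨j0, hj0⟩ := hcov
    obtain ⟨h1, h2⟩ := hj0
    cases hu : u (i + (j0:ℕ)) with
    | none => exact absurd hu h1
    | some c =>
      apply Finset.prod_eq_zero (Finset.mem_univ (⟨(j0:ℕ), lt_of_lt_of_le j0.2 hkn⟩ : Fin n))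
      have hc : ¬ c = v j0 := fun h => h2 (by rw [hu, h])
      simp only [hS, hu, Option.elim, dif_pos j0.2]
      rw [if_neg (by simpa using hc)]
      exact Finset.card_empty

lemma count_pairs (a n N k : ℕ) (hkn : k ≤ n)
    (u : ℕ → Option (Fin a))
    (hu : ∀ w : Fin n → Fin a, ∃! i : Fin N, Covers a n u (i : ℕ) w)
    (v : Fin k → Fin a) :
    ∑ i ∈ Finset.range N,
      (Finset.univ.filter (fun w : Fin n → Fin a =>
        Covers a n u i w ∧ ∀ j : Fin k, w ⟨j, lt_of_lt_of_le j.2 hkn⟩ = v j)).card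
      = a ^ (n - k) := by
  classical
  have step1 : ∀ i, (Finset.univ.filter (fun w : Fin n → Fin a =>
        Covers a n u i w ∧ ∀ j : Fin k, w ⟨j, lt_of_lt_of_le j.2 hkn⟩ = v j)).card
      = ∑ w : Fin n → Fin a,
          if Covers a n u i w ∧ ∀ j : Fin k, w ⟨j, lt_of_lt_of_le j.2 hkn⟩ = v j
          then 1 else 0 := fun i => Finset.card_filter _ _
  rw [Finset.sum_congr rfl (fun i _ => step1 i), Finset.sum_comm]
  have step2 : ∀ w : Fin n → Fin a,
      (∑ i ∈ Finset.range N,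
        if Covers a n u i w ∧ ∀ j : Fin k, w ⟨j, lt_of_lt_of_le j.2 hkn⟩ = v j
        then 1 else 0)
      = if ∀ j : Fin k, w ⟨j, lt_of_lt_of_le j.2 hkn⟩ = v j then 1 else 0 := by
    intro w
    by_cases hp : ∀ j : Fin k, w ⟨j, lt_of_lt_of_le j.2 hkn⟩ = v j
    · rw [if_pos hp]
      have : ∀ i ∈ Finset.range N,
          (if Covers a n u i w ∧ ∀ j : Fin k, w ⟨j, lt_of_lt_of_le j.2 hkn⟩ = v j
           then 1 else 0) = if Covers a n u i w then 1 else 0 := by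
        intro i _
        by_cases hc : Covers a n u i w <;> simp [hc, hp]
      rw [Finset.sum_congr rfl this]
      rw [← Finset.card_filter]
      obtain ⟨i0, hi0, huniq⟩ := hu w
      rw [Finset.card_eq_one]
      refine ⟨(i0 : ℕ), ?_⟩
      ext i
      simp only [Finset.mem_filter, Finset.mem_range, Finset.mem_singleton]
      constructor
      · rintro ⟨hiN, hic⟩
        have := huniq ⟨i, hiN⟩ hic
        exact congrArg Fin.val this
      · rintro rfl
        exact ⟨i0.2, hi0⟩
    · rw [if_neg hp]
      refine Finset.sum_eq_zero (fun i _ => ?_)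
      rw [if_neg (fun h => hp h.2)]
  rw [Finset.sum_congr rfl (fun w _ => step2 w), ← Finset.card_filter,
    prefix_count a n k hkn v]

/-- Partial subwords distribution property: for an upcycle `u` for `(Fin a)^n` with
diamondicity `d`, for every `k ∈ {1,…,n}` and every word `v` of length `k`, the
expected multiplicity `E(u, v) = Σ_{windows covering v} a^{-(number of diamonds)}`
equals `a^(n-d-k)`, i.e. `a^n / (a^d · a^k)`. -/
theorem partial_subwords_distribution (a n d k : ℕ) (ha : 2 ≤ a) (hn : 0 < n)
    (hd : d ≤ n) (hk1 : 1 ≤ k) (hkn : k ≤ n)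
    (u : ℕ → Option (Fin a))
    (hu : IsUpcycle a n (a ^ (n - d)) u)
    (hdiam : ∀ i, ((Finset.range n).filter (fun j => u (i + j) = none)).card = d)
    (v : Fin k → Fin a) :
    ∑ i ∈ Finset.range (a ^ (n - d)),
      (if Covers a k u i v then
        ((a : ℚ) ^ (((Finset.range k).filter (fun j => u (i + j) = none)).card))⁻¹
       else 0)
      = (a : ℚ) ^ n / ((a : ℚ) ^ d * (a : ℚ) ^ k) := by
  classical
  have ha0 : (a : ℚ) ≠ 0 := by positivity
  set q : ℕ → ℕ := fun i => ((Finset.range k).filter (fun j => u (i + j) = none)).card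
    with hq
  have hqd : ∀ i, q i ≤ d := by
    intro i
    rw [← hdiam i]
    apply Finset.card_le_card
    intro j hj
    simp only [Finset.mem_filter, Finset.mem_range] at hj ⊢
    exact ⟨lt_of_lt_of_le hj.1 hkn, hj.2⟩
  have key : ∑ i ∈ Finset.range (a ^ (n - d)),
      (if Covers a k u i v then a ^ (d - q i) else 0) = a ^ (n - k) := by
    rw [← count_pairs a n (a ^ (n - d)) k hkn u hu.2 v]
    refine Finset.sum_congr rfl (fun i _ => ?_)
    rw [count_ext a n k d hkn u i (hdiam i) v]
  have hterm : ∀ i, (if Covers a k u i v then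
        ((a : ℚ) ^ (q i))⁻¹ else 0)
      = (if Covers a k u i v then ((a : ℚ) ^ (d - q i)) else 0) / (a : ℚ) ^ d := by
    intro i
    by_cases hc : Covers a k u i v
    · rw [if_pos hc, if_pos hc, eq_div_iff (pow_ne_zero d ha0)]
      rw [inv_mul_eq_div, div_eq_iff (pow_ne_zero _ ha0), ← pow_add]
      have := hqd i
      congr 1
      omega
    · simp [hc]
  rw [Finset.sum_congr rfl (fun i _ => hterm i), ← Finset.sum_div]
  have hcast : ∑ i ∈ Finset.range (a ^ (n - d)),
      (if Covers a k u i v then ((a : ℚ) ^ (d - q i)) else 0)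
      = (((∑ i ∈ Finset.range (a ^ (n - d)),
          (if Covers a k u i v then a ^ (d - q i) else 0)) : ℕ) : ℚ) := by
    push_cast
    refine Finset.sum_congr rfl (fun i _ => ?_)
    split <;> simp
  rw [hcast, key]
  push_cast
  rw [div_eq_div_iff (pow_ne_zero _ ha0) (by positivity)]
  rw [← pow_add, ← pow_add, ← pow_add]
  congr 1
  omega
end

section
/- In any upcycle u for A^n with diamondicity d and a = |A|, each letter of A appears exactly ((n−d)/n)·a^{n−d−1} times in u. -/
open Finset

lemma aux_prod_ite_pow {α : Type*} (s : Finset α) (p : α → Prop) [DecidablePred p] (a : ℕ) :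
    (∏ x ∈ s, if p x then a else 1) = a ^ (s.filter p).card := by
  rw [Finset.prod_ite, Finset.prod_const, Finset.prod_const, one_pow, mul_one]

lemma aux_shift_one (N : ℕ) (f : ℕ → ℕ) (hf : ∀ i, f (i + N) = f i) :
    ∑ i ∈ range N, f (i + 1) = ∑ i ∈ range N, f i := by
  have h1 := Finset.sum_range_succ f N
  have h2 := Finset.sum_range_succ' f N
  have h3 : f N = f 0 := by simpa using hf 0
  omega

lemma aux_shift (N : ℕ) (f : ℕ → ℕ) (hf : ∀ i, f (i + N) = f i) (j : ℕ) :
    ∑ i ∈ range N, f (i + j) = ∑ i ∈ range N, f i := by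
  induction j with
  | zero => simp
  | succ j ih =>
    have hg : ∀ i, f (i + j + N) = f (i + j) := fun i => hf (i + j)
    calc ∑ i ∈ range N, f (i + (j + 1))
        = ∑ i ∈ range N, f ((i + 1) + j) := by
          refine Finset.sum_congr rfl fun i _ => ?_
          rw [show i + (j + 1) = (i + 1) + j by ring]
      _ = ∑ i ∈ range N, f (i + j) := by
          refine aux_shift_one N (fun k => f (k + j)) fun i => ?_
          show f (i + N + j) = f (i + j)
          rw [show i + N + j = i + j + N by ring, hg]
      _ = ∑ i ∈ range N, f i := ih

lemma aux_filter_card_pi {n a : ℕ} (S : Fin n → Finset (Fin a))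
    (P : (Fin n → Fin a) → Prop) [DecidablePred P]
    (h : ∀ w, P w ↔ ∀ j, w j ∈ S j) :
    (Finset.univ.filter P).card = ∏ j, (S j).card := by
  have he : Finset.univ.filter P = Fintype.piFinset S := by
    ext w
    simp [h w, Fintype.mem_piFinset]
  rw [he, Fintype.card_piFinset]

lemma aux_prod_point {n : ℕ} (c : Fin n → ℕ) (j0 : Fin n) :
    (∏ j, if j = j0 then 1 else c j) = ∏ j ∈ Finset.univ.erase j0, c j := by
  rw [← Finset.prod_erase_mul Finset.univ _ (Finset.mem_univ j0)]
  rw [if_pos rfl, mul_one]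
  exact Finset.prod_congr rfl (fun j hj => if_neg (Finset.mem_erase.1 hj).1)

/-- Balance: in any upcycle `u` for `(Fin a)^n` with diamondicity `d`, each letter `ℓ`
appears exactly `((n-d)/n) · a^(n-d-1)` times, stated multiplied through by `n`. -/
theorem upcycle_balance (a n d : ℕ) (ha : 2 ≤ a) (hn : 0 < n) (hd : d ≤ n)
    (u : ℕ → Option (Fin a))
    (hu : IsUpcycle a n (a ^ (n - d)) u)
    (hdiam : ∀ i, ((Finset.range n).filter (fun j => u (i + j) = none)).card = d)
    (ℓ : Fin a) :
    n * ((Finset.range (a ^ (n - d))).filter (fun i => u i = some ℓ)).card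
      = (n - d) * a ^ (n - d - 1) := by
  classical
  set N := a ^ (n - d) with hNdef
  have ha0 : 0 < a := by omega
  have hN : 0 < N := pow_pos ha0 _
  set K := ((Finset.range N).filter (fun i => u i = some ℓ)).card with hKdef
  -- diamond count, Fin version
  have hDfin : ∀ i : ℕ,
      (Finset.univ.filter (fun j : Fin n => u (i + (j : ℕ)) = none)).card = d := by
    intro i
    rw [← hdiam i, Finset.card_filter, Finset.card_filter]
    exact Fin.sum_univ_eq_sum_range (fun k => if u (i + k) = none then 1 else 0) n
  -- Covers as a pi-membership condition
  have hCov : ∀ (i : ℕ) (w : Fin n → Fin a), Covers a n u i w ↔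
      ∀ j : Fin n, w j ∈ (u (i + (j : ℕ))).elim (Finset.univ : Finset (Fin a)) (fun c => {c}) := by
    intro i w
    constructor
    · intro h j
      rcases h j with hj | hj <;> simp [hj]
    · intro h j
      specialize h j
      cases hj : u (i + (j : ℕ)) with
      | none => exact Or.inl rfl
      | some c =>
        right
        rw [hj] at h
        simp only [Option.elim, Finset.mem_singleton] at h
        rw [h]
  -- cardinality of covered words
  have hAcard : ∀ i : ℕ,
      (Finset.univ.filter (fun w => Covers a n u i w)).card = a ^ d := by
    intro i
    rw [aux_filter_card_pi _ _ (hCov i)]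
    have hc : ∀ j : Fin n,
        ((u (i + (j : ℕ))).elim (Finset.univ : Finset (Fin a)) (fun c => {c})).card
          = if u (i + (j : ℕ)) = none then a else 1 := by
      intro j
      cases hj : u (i + (j : ℕ)) <;> simp [hj]
    rw [Finset.prod_congr rfl (fun j _ => hc j), aux_prod_ite_pow, hDfin i]
  -- cardinality of covered words with prescribed letter at a diamond position
  have hBcard : ∀ (i : ℕ) (j0 : Fin n), u (i + (j0 : ℕ)) = none →
      ((Finset.univ.filter (fun w => Covers a n u i w)).filter (fun w => w j0 = ℓ)).card
        = a ^ (d - 1) := by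
    intro i j0 hj0
    rw [Finset.filter_filter]
    rw [aux_filter_card_pi
      (fun j : Fin n => if j = j0 then ({ℓ} : Finset (Fin a))
        else (u (i + (j : ℕ))).elim (Finset.univ : Finset (Fin a)) (fun c => {c}))
      _ ?_]
    · have hc : ∀ j : Fin n,
          ((if j = j0 then ({ℓ} : Finset (Fin a))
            else (u (i + (j : ℕ))).elim (Finset.univ : Finset (Fin a)) (fun c => {c})).card)
          = if j = j0 then 1 else (if u (i + (j : ℕ)) = none then a else 1) := by
        intro j
        by_cases hj : j = j0
        · simp [hj]
        · cases hj' : u (i + (j : ℕ)) <;> simp [hj, hj']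
      rw [Finset.prod_congr rfl (fun j _ => hc j), aux_prod_point, aux_prod_ite_pow,
        Finset.filter_erase, Finset.card_erase_of_mem, hDfin i]
      rw [Finset.mem_filter]
      exact ⟨Finset.mem_univ _, hj0⟩
    · intro w
      rw [hCov i w]
      constructor
      · rintro ⟨h1, h2⟩ j
        by_cases hj : j = j0
        · subst hj; simp [h2]
        · simp only [if_neg hj]; exact h1 j
      · intro h
        constructor
        · intro j
          by_cases hj : j = j0
          · subst hj; simp [hj0]
          · simpa only [if_neg hj] using h j
        · simpa using h j0
  -- pointwise split of letter occurrences for a covered word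
  have hsplit : ∀ (i : ℕ) (w : Fin n → Fin a), Covers a n u i w →
      (∑ j : Fin n, if w j = ℓ then 1 else 0)
        = (∑ j : Fin n, if u (i + (j : ℕ)) = some ℓ then 1 else 0)
          + (∑ j : Fin n, if u (i + (j : ℕ)) = none ∧ w j = ℓ then 1 else 0) := by
    intro i w hw
    rw [← Finset.sum_add_distrib]
    refine Finset.sum_congr rfl fun j _ => ?_
    rcases hw j with h | h
    · simp [h]
    · by_cases hwj : w j = ℓ
      · simp [h, hwj]
      · simp [h, hwj]
  -- the master sum
  set T := ∑ w : Fin n → Fin a, ∑ j : Fin n, if w j = ℓ then 1 else 0 with hTdef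
  -- First evaluation: T = n * a^(n-1)
  have hT1 : T = n * a ^ (n - 1) := by
    rw [hTdef, Finset.sum_comm]
    have hper : ∀ j : Fin n,
        (∑ w : Fin n → Fin a, if w j = ℓ then 1 else 0) = a ^ (n - 1) := by
      intro j
      rw [← Finset.card_filter]
      rw [aux_filter_card_pi
        (fun k : Fin n => if k = j then ({ℓ} : Finset (Fin a)) else Finset.univ) _ ?_]
      · have hc : ∀ k : Fin n,
            ((if k = j then ({ℓ} : Finset (Fin a)) else Finset.univ).card)
              = if k = j then 1 else a := by
          intro k
          by_cases hk : k = j <;> simp [hk]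
        rw [Finset.prod_congr rfl (fun k _ => hc k), aux_prod_point, Finset.prod_const,
          Finset.card_erase_of_mem (Finset.mem_univ j), Finset.card_univ, Fintype.card_fin]
      · intro w
        constructor
        · intro hw k
          by_cases hk : k = j
          · subst hk; simp [hw]
          · simp [hk]
        · intro h
          simpa using h j
    rw [Finset.sum_congr rfl (fun j _ => hper j), Finset.sum_const, Finset.card_univ,
      Fintype.card_fin, smul_eq_mul]
  -- Second evaluation: group by the covering window
  have hT2 : T = a ^ d * (n * K) + N * (d * a ^ (d - 1)) := by
    -- grouping function
    have hfib : ∀ i ∈ Finset.range N,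
        (Finset.univ.filter
          (fun w : Fin n → Fin a => ((hu.2 w).exists.choose : Fin N).val = i))
          = Finset.univ.filter (fun w => Covers a n u i w) := by
      intro i hi
      ext w
      simp only [Finset.mem_filter, Finset.mem_univ, true_and]
      constructor
      · intro h
        have hs := (hu.2 w).exists.choose_spec
        rwa [h] at hs
      · intro h
        have hiN : i < N := Finset.mem_range.1 hi
        have := ExistsUnique.unique (hu.2 w) (hu.2 w).exists.choose_spec
          (show Covers a n u ((⟨i, hiN⟩ : Fin N) : ℕ) w from h)
        rw [this]
    have hgroup := Finset.sum_fiberwise_of_maps_to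
      (g := fun w : Fin n → Fin a => ((hu.2 w).exists.choose : Fin N).val)
      (s := Finset.univ) (t := Finset.range N)
      (fun w _ => Finset.mem_range.2 (Fin.is_lt _))
      (fun w => ∑ j : Fin n, if w j = ℓ then 1 else 0)
    rw [hTdef, ← hgroup]
    rw [Finset.sum_congr rfl (fun i hi => by rw [hfib i hi])]
    -- per-window sum
    have hwin : ∀ i : ℕ,
        (∑ w ∈ Finset.univ.filter (fun w => Covers a n u i w),
          ∑ j : Fin n, if w j = ℓ then 1 else 0)
        = a ^ d * (∑ j : Fin n, if u (i + (j : ℕ)) = some ℓ then 1 else 0)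
          + d * a ^ (d - 1) := by
      intro i
      have hsc : ∀ w ∈ Finset.univ.filter (fun w => Covers a n u i w),
          (∑ j : Fin n, if w j = ℓ then 1 else 0)
          = (∑ j : Fin n, if u (i + (j : ℕ)) = some ℓ then 1 else 0)
            + (∑ j : Fin n, if u (i + (j : ℕ)) = none ∧ w j = ℓ then 1 else 0) := by
        intro w hw
        exact hsplit i w (Finset.mem_filter.1 hw).2
      rw [Finset.sum_congr rfl hsc, Finset.sum_add_distrib, Finset.sum_const,
        hAcard i, smul_eq_mul]
      congr 1
      -- the diamond contribution
      rw [Finset.sum_comm]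
      have hin : ∀ j : Fin n,
          (∑ w ∈ Finset.univ.filter (fun w => Covers a n u i w),
            if u (i + (j : ℕ)) = none ∧ w j = ℓ then 1 else 0)
          = if u (i + (j : ℕ)) = none then a ^ (d - 1) else 0 := by
        intro j
        by_cases hj : u (i + (j : ℕ)) = none
        · rw [if_pos hj, ← hBcard i j hj, Finset.card_filter]
          refine Finset.sum_congr rfl fun w _ => ?_
          simp [hj]
        · rw [if_neg hj]
          refine Finset.sum_eq_zero fun w _ => ?_
          simp [hj]
      rw [Finset.sum_congr rfl (fun j _ => hin j), Finset.sum_ite, Finset.sum_const,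
        Finset.sum_const, smul_eq_mul, smul_eq_mul, mul_zero, add_zero, hDfin i]
    rw [Finset.sum_congr rfl (fun i _ => hwin i), Finset.sum_add_distrib,
      Finset.sum_const, Finset.card_range, smul_eq_mul, ← Finset.mul_sum]
    congr 1
    congr 1
    -- cyclic double count: ∑_{i<N} count in window = n * K
    have hconv : ∀ i : ℕ,
        (∑ j : Fin n, if u (i + (j : ℕ)) = some ℓ then 1 else 0)
        = ∑ j ∈ Finset.range n, if u (i + j) = some ℓ then 1 else 0 := fun i =>
      Fin.sum_univ_eq_sum_range (fun k => if u (i + k) = some ℓ then 1 else 0) n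
    rw [Finset.sum_congr rfl (fun i _ => hconv i), Finset.sum_comm]
    have hsh : ∀ j : ℕ,
        (∑ i ∈ Finset.range N, if u (i + j) = some ℓ then 1 else 0)
        = ∑ i ∈ Finset.range N, if u i = some ℓ then 1 else 0 := by
      intro j
      exact aux_shift N (fun k => if u k = some ℓ then 1 else 0)
        (fun i => by simp only [hu.1 i]) j
    rw [Finset.sum_congr rfl (fun j _ => hsh j), Finset.sum_const, Finset.card_range,
      smul_eq_mul, hKdef, Finset.card_filter]
  -- final arithmetic
  clear_value T K N
  have key : n * a ^ (n - 1) = a ^ d * (n * K) + d * a ^ (n - 1) := by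
    rw [← hT1, hT2]
    congr 1
    rcases Nat.eq_zero_or_pos d with h0 | h1
    · simp [h0]
    · rw [hNdef, mul_comm (a ^ (n - d)) (d * a ^ (d - 1)), mul_assoc, ← pow_add]
      congr 2
      clear hu hdiam hCov hAcard hBcard hsplit hT1 hT2 hKdef hTdef hNdef
      omega
  have hX : a ^ d * (n * K) = (n - d) * a ^ (n - 1) := by
    rw [Nat.sub_mul n d, key, Nat.add_sub_cancel]
  rcases Nat.lt_or_ge d n with hdn | hdn
  · -- d < n
    have he : a ^ (n - 1) = a ^ (n - d - 1) * a ^ d := by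
      rw [← pow_add]
      congr 1
      clear hu hdiam hCov hAcard hBcard hsplit hT1 hT2 hKdef hTdef hNdef key hX
      omega
    have hX' : a ^ d * (n * K) = a ^ d * ((n - d) * a ^ (n - d - 1)) := by
      rw [hX, he]; ring
    exact Nat.eq_of_mul_eq_mul_left (pow_pos ha0 d) hX'
  · have hdn' : d = n := le_antisymm hd hdn
    have h0 : n - d = 0 := by rw [hdn', Nat.sub_self]
    rw [h0] at hX ⊢
    simp only [zero_mul] at hX ⊢
    rcases Nat.mul_eq_zero.mp hX with h | h
    · exact absurd h (pow_pos ha0 d).ne'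
    · exact h
end

section
/- If there exists an upcycle for A^n with diamondicity d and a = |A|, then n divides d·a^{n−d−1}. In particular, if gcd(d,n) = 1 then n divides a^{n−d−1}. -/
/-!
Fix a letter `c` and count its occurrences in all words of `A^n`: there are `n a^(n-1)` of them.
Every word is covered by exactly one of the `a^(n-d)` windows, and the `a^d` words covered by a
window with `d` diamonds and `k` occurrences of `c` contain `c` in total `d a^(d-1) + k a^d` times.
By periodicity the `k` of all windows add up to `n m`, where `m` counts the occurrences of `c` in
the cycle. Hence `n a^(n-1) = d a^(n-1) + n m a^d`, that is `n m = (n - d) a^(n-d-1)`, so `n`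
divides `(n - d) a^(n-d-1)` and therefore also `d a^(n-d-1)`.
-/

open Finset Fintype

section Completions

variable {α : Type*} [Fintype α]

def completions : Option α → Finset α
  | none => univ
  | some b => {b}

lemma mem_completions {x : Option α} {b : α} :
    b ∈ completions x ↔ x = none ∨ x = some b := by
  cases x <;> simp [completions, eq_comm]

lemma card_completions (x : Option α) : #(completions x) = if x = none then card α else 1 := by
  cases x <;> simp [completions]

variable {n : ℕ}

lemma prod_card_completions (x : Fin n → Option α) :
    ∏ j, #(completions (x j)) = card α ^ #{j | x j = none} := by
  simp only [card_completions, prod_ite, prod_const, one_pow, mul_one]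

variable [DecidableEq α]

/-- Scaled by `card α` to avoid the exponent `#{i | x i = none} - 1`, which truncates when there
is no diamond. -/
lemma card_mul_card_filter_piFinset_completions (x : Fin n → Option α) (j : Fin n) (c : α) :
    card α * #{w ∈ piFinset (fun i ↦ completions (x i)) | w j = c} =
      if x j = none then card α ^ #{i | x i = none}
      else if x j = some c then card α * card α ^ #{i | x i = none} else 0 := by
  have hsplit := mul_prod_erase univ (fun i ↦ #(completions (x i))) (mem_univ j)
  rw [prod_card_completions] at hsplit
  rw [Fintype.card_filter_piFinset_eq (fun i ↦ completions (x i)) j c]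
  cases hx : x j with
  | none => simp_all [completions]
  | some b =>
    obtain rfl | hbc := eq_or_ne b c
    · simp_all [completions]
    · simp [completions, hbc, hbc.symm]

theorem card_mul_sum_card_filter_piFinset_completions (x : Fin n → Option α) (c : α) :
    card α * ∑ w ∈ piFinset (fun j ↦ completions (x j)), #{j | w j = c} =
      card α ^ #{j | x j = none} * (#{j | x j = none} + card α * #{j | x j = some c}) := by
  calc card α * ∑ w ∈ piFinset (fun j ↦ completions (x j)), #{j | w j = c}
      = ∑ j, card α * #{w ∈ piFinset (fun i ↦ completions (x i)) | w j = c} := by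
        rw [← mul_sum]
        congr 1
        exact sum_card_bipartiteAbove_eq_sum_card_bipartiteBelow
          (r := fun (w : Fin n → α) j ↦ w j = c)
    _ = ∑ j, (card α ^ #{j | x j = none} * if x j = none then 1 else 0) +
          ∑ j, card α * card α ^ #{j | x j = none} * if x j = some c then 1 else 0 := by
        rw [← sum_add_distrib]
        refine sum_congr rfl fun j _ ↦ ?_
        rw [card_mul_card_filter_piFinset_completions]
        split_ifs <;> simp_all
    _ = _ := by simp only [← mul_sum, sum_boole, Nat.cast_id]; ring
    
end Completions

lemma Fin.card_filter_univ_eq_card_filter_range {n : ℕ} (p : ℕ → Prop) [DecidablePred p] :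
    #{j : Fin n | p j} = #{j ∈ range n | p j} := by
  simp only [card_filter]
  exact Fin.sum_univ_eq_sum_range (fun j ↦ if p j then 1 else 0) n

lemma Function.Periodic.sum_range_add {M : Type*} [AddCancelCommMonoid M] {f : ℕ → M} {N : ℕ}
    (hf : Function.Periodic f N) (j : ℕ) :
    ∑ s ∈ range N, f (s + j) = ∑ s ∈ range N, f s := by
  induction j with
  | zero => rfl
  | succ j ih =>
    rw [← ih]
    apply add_right_cancel (b := f j)
    have hshift := sum_range_succ' (fun s ↦ f (s + j)) N
    rw [sum_range_succ, add_comm N j, hf j] at hshift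
    simpa only [add_right_comm _ 1 j, zero_add, add_assoc] using hshift.symm

lemma Function.Periodic.sum_range_sum_range_add {M : Type*} [AddCancelCommMonoid M] {f : ℕ → M}
    {N : ℕ} (hf : Function.Periodic f N) (n : ℕ) :
    ∑ s ∈ range N, ∑ j ∈ range n, f (s + j) = n • ∑ s ∈ range N, f s := by
  rw [sum_comm, sum_congr rfl fun j _ ↦ hf.sum_range_add j, sum_const, card_range]

variable {a n : ℕ} {u : ℕ → Option (Fin a)}

lemma covers_iff_mem_piFinset {i : ℕ} {w : Fin n → Fin a} :
    Covers a n u i w ↔ w ∈ piFinset fun j : Fin n ↦ completions (u (i + j)) := by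
  simp [Covers, mem_completions]

lemma IsUpcycle.sum_sum_piFinset_completions {N : ℕ} {M : Type*} [AddCommMonoid M]
    (hu : IsUpcycle a n N u) (f : (Fin n → Fin a) → M) :
    ∑ s : Fin N, ∑ w ∈ piFinset (fun j : Fin n ↦ completions (u (s + j))), f w =
      ∑ w, f w := by
  rw [← sum_fiberwise univ (fun w ↦ (hu.2 w).choose) f]
  refine sum_congr rfl fun s _ ↦ sum_congr ?_ fun _ _ ↦ rfl
  ext w
  simp only [mem_filter, mem_univ, true_and, ← covers_iff_mem_piFinset]
  exact ⟨(hu.2 w).unique (hu.2 w).choose_spec.1, by rintro rfl; exact (hu.2 w).choose_spec.1⟩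

theorem IsUpcycle.mul_card_filter_some_eq {d : ℕ} (hu : IsUpcycle a n (a ^ (n - d)) u)
    (hdiam : ∀ i, #{j ∈ range n | u (i + j) = none} = d) (c : Fin a) :
    n * #{p ∈ range (a ^ (n - d)) | u p = some c} = (n - d) * a ^ (n - d - 1) := by
  set N := a ^ (n - d)
  set m := #{p ∈ range N | u p = some c}
  have hd : d ≤ n := hdiam 0 ▸ (card_filter_le _ _).trans (card_range n).le
  have hletters : ∑ s : Fin N, #{j : Fin n | u (s + j) = some c} = n * m := by
    have hper : Function.Periodic (fun p ↦ if u p = some c then 1 else 0) N :=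
      fun p ↦ by simp only [hu.1 p]
    rw [Fin.sum_univ_eq_sum_range (fun s ↦ #{j : Fin n | u (s + j) = some c}) N,
      sum_congr rfl fun s _ ↦
        Fin.card_filter_univ_eq_card_filter_range (fun j ↦ u (s + j) = some c)]
    simp only [m, card_filter]
    rw [hper.sum_range_sum_range_add, smul_eq_mul]
  have hwindow (s : ℕ) :
      a * ∑ w ∈ piFinset (fun j : Fin n ↦ completions (u (s + j))), #{j | w j = c} =
        a ^ d * (d + a * #{j : Fin n | u (s + j) = some c}) := by
    have hdiam' : #{j : Fin n | u (s + j) = none} = d :=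
      (Fin.card_filter_univ_eq_card_filter_range _).trans (hdiam s)
    simpa only [Fintype.card_fin, hdiam'] using
      card_mul_sum_card_filter_piFinset_completions (fun j : Fin n ↦ u (s + j)) c
  have htotal : a * ∑ w : Fin n → Fin a, #{j | w j = c} = n * a ^ n := by
    simpa [completions, mul_comm] using
      card_mul_sum_card_filter_piFinset_completions (fun _ : Fin n ↦ none) c
  have hwindows :
      a * ∑ w : Fin n → Fin a, #{j | w j = c} = d * a ^ n + a ^ (d + 1) * (n * m) := by
    rw [← hu.sum_sum_piFinset_completions, mul_sum, sum_congr rfl fun (s : Fin N) _ ↦ hwindow s]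
    simp only [mul_add, sum_add_distrib, ← mul_sum, hletters, sum_const, card_univ,
      Fintype.card_fin, smul_eq_mul]
    rw [show a ^ n = N * a ^ d by rw [← pow_add, Nat.sub_add_cancel hd]]
    ring
  have hpow : (n - d) * a ^ n = a ^ (d + 1) * ((n - d) * a ^ (n - d - 1)) := by
    rcases hd.lt_or_eq with hlt | rfl
    · rw [mul_left_comm, ← pow_add]
      congr 2
      omega
    · simp
  refine (Nat.eq_of_mul_eq_mul_left (pow_pos c.pos (d + 1)) ?_).symm
  rw [← hpow, Nat.sub_mul, ← htotal, hwindows, Nat.add_sub_cancel_left]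

theorem upcycle_divisibility_general (a n d : ℕ)
    (u : ℕ → Option (Fin a))
    (hu : IsUpcycle a n (a ^ (n - d)) u)
    (hdiam : ∀ i, ((Finset.range n).filter (fun j => u (i + j) = none)).card = d) :
    n ∣ d * a ^ (n - d - 1) ∧ (Nat.gcd d n = 1 → n ∣ a ^ (n - d - 1)) := by
  suffices hdvd : n ∣ d * a ^ (n - d - 1) from
    ⟨hdvd, fun hdn ↦ (Nat.coprime_comm.mp hdn).dvd_of_dvd_mul_left hdvd⟩
  have hd : d ≤ n := hdiam 0 ▸ (card_filter_le _ _).trans (card_range n).le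
  rcases hd.lt_or_eq with hlt | rfl
  · obtain ⟨j, -, hletter⟩ : ∃ j ∈ range n, u j ≠ none := by
      by_contra! hnone
      have h0 := hdiam 0
      simp only [zero_add, filter_true_of_mem hnone, card_range] at h0
      omega
    obtain ⟨c, -⟩ := Option.ne_none_iff_exists'.mp hletter
    rw [← Nat.dvd_add_right (Dvd.intro _ (hu.mul_card_filter_some_eq hdiam c)), ← add_mul,
      Nat.sub_add_cancel hd]
    exact dvd_mul_right _ _
  · exact dvd_mul_right _ _

/-- If there exists an upcycle for `(Fin a)^n` with diamondicity `d`, then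
`n ∣ d · a^(n-d-1)`; in particular if `gcd(d, n) = 1` then `n ∣ a^(n-d-1)`. -/
theorem upcycle_divisibility (a n d : ℕ) (ha : 2 ≤ a) (hn : 0 < n) (hd : d ≤ n)
    (u : ℕ → Option (Fin a))
    (hu : IsUpcycle a n (a ^ (n - d)) u)
    (hdiam : ∀ i, ((Finset.range n).filter (fun j => u (i + j) = none)).card = d) :
    n ∣ d * a ^ (n - d - 1) ∧ (Nat.gcd d n = 1 → n ∣ a ^ (n - d - 1)) :=
  upcycle_divisibility_general a n d u hu hdiam
end

section
/- There exist no nontrivial upcycles for A^n with diamondicity d and a = |A| when gcd(a^{n−d}, n) ≤ 3; equivalently, every nontrivial upcycle has frame period at least 4. -/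
/-!
The diamonds of an upcycle of length `N` are `N`-periodic, and also `n`-periodic since every
window holds `d` of them; so they are `g`-periodic for `g = gcd N n`. If no two consecutive
positions carried letters, the word reading at `j` the letter at `j`, or else the one at `j + 1`,
would be covered by the windows at `0` and `1`. With two consecutive letters and `g ≤ 3`, the
frame must be `◊••` with period `3`, so `n = 3q`, `d = q` and `N = a^(2q)`.

In that case a window starting at a diamond position `p` is determined by the pair of strands
`(X p, Y p)` of letters at `p + 1 + 3t` and `p + 2 + 3t`. Unique covering makes `p ↦ (X p, Y p)`
injective on the `N / 3` diamond positions of a period, and no `X p` equals a `Y p'`, since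
otherwise one word would be covered by windows at `p` and `p' + 1`. Hence
`N / 3 ≤ #X * #Y ≤ (a^q)^2 / 4 = N / 4`.
-/

open Finset Function

theorem Function.Periodic.nat_gcd {β : Type*} {f : ℕ → β} {m n : ℕ}
    (hm : Periodic f m) (hn : Periodic f n) : Periodic f (m.gcd n) := by
  induction m, n using Nat.gcd.induction with
  | H0 n => simpa using hn
  | H1 m n _ ih =>
    rw [Nat.gcd_rec]
    refine ih (fun x => ?_) hm
    rw [← hm.nat_mul (n / m) (x + n % m), Nat.cast_id, add_assoc, mul_comm, Nat.mod_add_div, hn]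

theorem periodic_of_card_filter_window (p : ℕ → Prop) [DecidablePred p] {n d : ℕ}
    (h : ∀ i, #{j ∈ range n | p (i + j)} = d) : Periodic p n := by
  intro i
  have hsum : ∀ i, ∑ j ∈ range n, (if p (i + j) then 1 else 0) = d := fun i => by
    rw [← card_filter, h]
  have h1 := sum_range_succ (fun j => if p (i + j) then 1 else 0) n
  have h2 := sum_range_succ' (fun j => if p (i + j) then 1 else 0) n
  simp only [hsum, ← add_assoc, add_right_comm i _ 1] at h1 h2
  rw [h1, add_zero] at h2
  by_cases hi : p i <;> by_cases hin : p (i + n) <;> simp_all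

theorem card_filter_range_mul_mod_eq {r k : ℕ} (m : ℕ) (hk : k < r) :
    #{x ∈ range (r * m) | x % r = k} = m := by
  have h := Nat.count_modEq_card (r * m) (by omega : 0 < r) k
  rw [Nat.count_eq_card_filter_range] at h
  simpa [Nat.ModEq, Nat.mod_eq_of_lt hk, Nat.mul_div_cancel_left m (by omega : 0 < r)] using h

theorem four_mul_card_le_sq {K : Type*} [Fintype K] [DecidableEq K] {X Y : Finset K}
    {S : Finset (K × K)} (hS : S ⊆ X ×ˢ Y) (hXY : Disjoint X Y) :
    4 * #S ≤ Fintype.card K ^ 2 :=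
  calc 4 * #S ≤ 4 * (#X * #Y) := by grw [card_le_card hS, card_product]
    _ ≤ (#X + #Y) ^ 2 := by grw [← four_mul_le_sq_add, mul_assoc]
    _ = #(X ∪ Y) ^ 2 := by rw [card_union_of_disjoint hXY]
    _ ≤ Fintype.card K ^ 2 := by grw [card_le_univ]

theorem Function.Periodic.iff_mod_three_of_le_three {p : ℕ → Prop} {g z : ℕ}
    (hp : Periodic p g) (hg0 : 0 < g) (hg : g ≤ 3) (hx : ∃ x, p x) (hz : ¬ p z) (hz1 : ¬ p (z + 1)) :
    g = 3 ∧ ∀ x, p x ↔ x % 3 = (z + 2) % 3 := by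
  have key : ∀ x y, x % g = y % g → (p x ↔ p y) := fun x y h => by
    rw [← hp.map_mod_nat x, h, hp.map_mod_nat]
  obtain ⟨x, hx⟩ := hx
  interval_cases g
  · exact absurd ((key x z (by omega)).1 hx) hz
  · rcases (by omega : x % 2 = z % 2 ∨ x % 2 = (z + 1) % 2) with h | h
    · exact absurd ((key x z h).1 hx) hz
    · exact absurd ((key x (z + 1) h).1 hx) hz1
  · have hres : ∀ y, p y → y % 3 = (z + 2) % 3 := fun y hy => by
      by_contra hy'
      rcases (by omega : y % 3 = z % 3 ∨ y % 3 = (z + 1) % 3) with h | h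
      · exact hz ((key y z h).1 hy)
      · exact hz1 ((key y (z + 1) h).1 hy)
    exact ⟨rfl, fun y => ⟨hres y, fun hy => (key x y (hy ▸ hres x hx)).1 hx⟩⟩

namespace IsUpcycle

variable {a n N : ℕ} {u : ℕ → Option (Fin a)}

theorem periodic (hu : IsUpcycle a n N u) : Periodic u N := hu.1

theorem covers_mod (hu : IsUpcycle a n N u) {i : ℕ} {w : Fin n → Fin a}
    (h : Covers a n u i w) : Covers a n u (i % N) w := by
  intro j
  rw [← hu.periodic.map_mod_nat, Nat.mod_add_mod, hu.periodic.map_mod_nat]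
  exact h j

theorem modEq_of_covers_s19 (hu : IsUpcycle a n N u) {i i' : ℕ} {w : Fin n → Fin a}
    (h : Covers a n u i w) (h' : Covers a n u i' w) : i ≡ i' [MOD N] := by
  obtain ⟨k, -, hk⟩ := hu.2 w
  have hN : 0 < N := k.pos
  exact congrArg Fin.val ((hk ⟨_, Nat.mod_lt i hN⟩ (hu.covers_mod h)).trans
    (hk ⟨_, Nat.mod_lt i' hN⟩ (hu.covers_mod h')).symm)

theorem length_ne_one (hu : IsUpcycle a n N u) (hdiamond : ∃ i, u i = none)
    (hletter : ∃ i, u i ≠ none) : N ≠ 1 := by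
  rintro rfl
  obtain ⟨i, hi⟩ := hdiamond
  obtain ⟨j, hj⟩ := hletter
  rw [← hu.periodic.map_mod_nat i, Nat.mod_one] at hi
  rw [← hu.periodic.map_mod_nat j, Nat.mod_one] at hj
  exact hj hi

theorem exists_consecutive_letters [NeZero a] (hu : IsUpcycle a n N u) (hN : N ≠ 1) :
    ∃ z, u z ≠ none ∧ u (z + 1) ≠ none := by
  by_contra! h
  let w : Fin n → Fin a := fun j => (u j).getD ((u (j + 1)).getD 0)
  have h0 : Covers a n u 0 w := fun j => by
    cases hj : u (0 + j) <;> simp_all [w]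
  have h1 : Covers a n u 1 w := fun j => by
    cases hj : u (1 + j) with
    | none => exact Or.inl rfl
    | some c =>
      rw [add_comm] at hj
      have hj' : u j = none := by_contra fun hne => by simp [h j hne] at hj
      simp [w, hj', hj]
  have h01 := (Nat.modEq_iff_dvd' zero_le_one).1 (hu.modEq_of_covers_s19 h0 h1)
  exact hN (Nat.dvd_one.1 h01)

end IsUpcycle

section DiamondsModThree

variable {a q N ρ : ℕ} [NeZero a] {u : ℕ → Option (Fin a)}

def strandFrom (u : ℕ → Option (Fin a)) (m : ℕ) : Fin q → Fin a :=
  fun t => (u (m + 3 * t)).getD 0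

def interleave {α : Type*} (T : Fin 3 → Fin q → α) : Fin (3 * q) → α :=
  fun j => T ⟨j % 3, Nat.mod_lt _ three_pos⟩ ⟨j / 3, by omega⟩

theorem covers_interleave (hdiam : ∀ x, u x = none ↔ x % 3 = ρ) {i : ℕ}
    {T : Fin 3 → Fin q → Fin a}
    (hT : ∀ r : Fin 3, (i + r) % 3 ≠ ρ → T r = strandFrom u (i + r)) :
    Covers a (3 * q) u i (interleave T) := by
  intro j
  by_cases hj : (i + j) % 3 = ρ
  · exact Or.inl ((hdiam _).2 hj)
  · right
    have hr := hT ⟨j % 3, Nat.mod_lt _ three_pos⟩ (by simpa [Nat.add_mod] using hj)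
    rw [interleave, hr, strandFrom, show i + j % 3 + 3 * (j / 3) = i + j by omega]
    exact (Option.getD_of_ne_none (fun h => hj ((hdiam _).1 h)) 0).symm

namespace IsUpcycle

theorem strandFrom_add_one_ne_add_two (hu : IsUpcycle a (3 * q) N u) (hN : 3 ∣ N)
    (hdiam : ∀ x, u x = none ↔ x % 3 = ρ) {p p' : ℕ} (hp : p % 3 = ρ) (hp' : p' % 3 = ρ) :
    strandFrom (q := q) u (p + 1) ≠ strandFrom u (p' + 2) := by
  intro h
  let T : Fin 3 → Fin q → Fin a :=
    ![strandFrom u (p' + 1), strandFrom u (p + 1), strandFrom u (p + 2)]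
  have hc : Covers a (3 * q) u p (interleave T) :=
    covers_interleave hdiam fun r hr => by fin_cases r <;> simp_all [T]
  have hc' : Covers a (3 * q) u (p' + 1) (interleave T) :=
    covers_interleave hdiam fun r hr => by fin_cases r <;> simp_all [T, add_assoc]
  have h3 := (hu.modEq_of_covers_s19 hc hc').of_dvd hN
  unfold Nat.ModEq at h3
  omega

theorem eq_of_strandFrom_eq (hu : IsUpcycle a (3 * q) N u)
    (hdiam : ∀ x, u x = none ↔ x % 3 = ρ) {p p' : ℕ} (hpN : p < N) (hp'N : p' < N)
    (hp : p % 3 = ρ) (hp' : p' % 3 = ρ)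
    (h1 : strandFrom (q := q) u (p + 1) = strandFrom u (p' + 1))
    (h2 : strandFrom (q := q) u (p + 2) = strandFrom u (p' + 2)) : p = p' := by
  let T : Fin 3 → Fin q → Fin a :=
    ![strandFrom u p, strandFrom u (p + 1), strandFrom u (p + 2)]
  have hc : Covers a (3 * q) u p (interleave T) :=
    covers_interleave hdiam fun r hr => by fin_cases r <;> simp_all [T]
  have hc' : Covers a (3 * q) u p' (interleave T) :=
    covers_interleave hdiam fun r hr => by fin_cases r <;> simp_all [T]
  exact (hu.modEq_of_covers_s19 hc hc').eq_of_lt_of_lt hpN hp'N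

theorem four_mul_le_of_diamonds_mod_three (hu : IsUpcycle a (3 * q) N u) (hN : 3 ∣ N)
    (hρ : ρ < 3) (hdiam : ∀ x, u x = none ↔ x % 3 = ρ) : 4 * N ≤ 3 * (a ^ q) ^ 2 := by
  classical
  obtain ⟨M, rfl⟩ := hN
  set P := {p ∈ range (3 * M) | p % 3 = ρ}
  let X := P.image fun p => strandFrom (q := q) u (p + 1)
  let Y := P.image fun p => strandFrom (q := q) u (p + 2)
  let S := P.image fun p => (strandFrom (q := q) u (p + 1), strandFrom (q := q) u (p + 2))
  have hS : #S = M := by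
    rw [card_image_of_injOn, card_filter_range_mul_mod_eq M hρ]
    intro p hp p' hp' h
    simp only [P, coe_filter, mem_range, Set.mem_ofPred_eq] at hp hp'
    exact hu.eq_of_strandFrom_eq hdiam hp.1 hp'.1 hp.2 hp'.2 (congrArg Prod.fst h)
      (congrArg Prod.snd h)
  have hSXY : S ⊆ X ×ˢ Y := by
    intro x hx
    obtain ⟨p, hp, rfl⟩ := mem_image.1 hx
    exact mem_product.2 ⟨mem_image_of_mem _ hp, mem_image_of_mem _ hp⟩
  have hXY : Disjoint X Y := by
    rw [disjoint_left]
    rintro _ hX hY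
    obtain ⟨p, hp, rfl⟩ := mem_image.1 hX
    obtain ⟨p', hp', h⟩ := mem_image.1 hY
    exact hu.strandFrom_add_one_ne_add_two ⟨M, rfl⟩ hdiam (mem_filter.1 hp).2
      (mem_filter.1 hp').2 h.symm
  have := four_mul_card_le_sq hSXY hXY
  rw [hS, Fintype.card_fun, Fintype.card_fin, Fintype.card_fin] at this
  omega

end IsUpcycle

end DiamondsModThree

theorem no_upcycle_of_gcd_le_three_general (a n d : ℕ) (ha : 2 ≤ a)
    (u : ℕ → Option (Fin a))
    (hu : IsUpcycle a n (a ^ (n - d)) u)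
    (hdiam : ∀ i, ((Finset.range n).filter (fun j => u (i + j) = none)).card = d)
    (hdiamond : ∃ i, u i = none) (hletter : ∃ i, u i ≠ none) :
    3 < Nat.gcd (a ^ (n - d)) n := by
  have : NeZero a := ⟨by omega⟩
  by_contra! hg
  obtain ⟨z, hz, hz1⟩ := hu.exists_consecutive_letters (hu.length_ne_one hdiamond hletter)
  have hframe : Periodic (fun i => u i = none) (Nat.gcd (a ^ (n - d)) n) :=
    (hu.periodic.comp (· = none)).nat_gcd (periodic_of_card_filter_window _ hdiam)
  obtain ⟨hg3, hρ⟩ := hframe.iff_mod_three_of_le_three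
    (Nat.gcd_pos_of_pos_left n (by positivity)) hg hdiamond hz hz1
  obtain ⟨h3N, q, rfl⟩ : 3 ∣ a ^ (n - d) ∧ 3 ∣ n := Nat.dvd_gcd_iff.1 (by rw [hg3])
  obtain rfl : d = q := by
    have hd := hdiam 0
    simp only [zero_add, hρ] at hd
    rw [← hd, card_filter_range_mul_mod_eq q (Nat.mod_lt (z + 2) three_pos)]
  have h4 := hu.four_mul_le_of_diamonds_mod_three h3N (Nat.mod_lt (z + 2) three_pos) hρ
  rw [show 3 * d - d = d * 2 by omega, pow_mul] at h4
  have : 0 < (a ^ d) ^ 2 := by positivity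
  omega

/-- There are no nontrivial upcycles for `(Fin a)^n` with diamondicity `d` when
`gcd(a^(n-d), n) ≤ 3`: every nontrivial upcycle satisfies `gcd(a^(n-d), n) > 3`
(equivalently, has frame period at least 4). -/
theorem no_upcycle_of_gcd_le_three (a n d : ℕ) (ha : 2 ≤ a) (hn : 0 < n) (hd : d ≤ n)
    (u : ℕ → Option (Fin a))
    (hu : IsUpcycle a n (a ^ (n - d)) u)
    (hdiam : ∀ i, ((Finset.range n).filter (fun j => u (i + j) = none)).card = d)
    (hdiamond : ∃ i, u i = none) (hletter : ∃ i, u i ≠ none) :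
    3 < Nat.gcd (a ^ (n - d)) n :=
  no_upcycle_of_gcd_le_three_general a n d ha u hu hdiam hdiamond hletter
end
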